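/- arXiv:1807.10496 — 9 statements merged into one kernel-verified Lean document; each statement's English description precedes it below -/
import Mathlib

section
/- Let 𝓗 be an admissible affine hyperplane arrangement in E with fundamental domain ⋀ (the closure of a fixed chamber). Then every flat L' of 𝓗 is W_𝓗-conjugate to a flat lying over ⋀: there exists w ∈ W_𝓗 such that w(L') equals the affine span of w(L') ∩ ⋀. -/
section ArrangementSetup

variable {V : Type*} [NormedAddCommGroup V] [InnerProductSpace ℝ V] [FiniteDimensional ℝ V]
variable {E : Type*} [MetricSpace E] [NormedAddTorsor V E]

/-- An affine hyperplane of the Euclidean affine space `E`: a nonempty affine subspace whose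
direction has codimension `1`. -/
def IsAffineHyperplane (H : AffineSubspace ℝ E) : Prop :=
  (H : Set E).Nonempty ∧ Module.finrank ℝ H.direction + 1 = Module.finrank ℝ V

/-- `g` is the orthogonal reflection of `E` across the affine hyperplane `H`: an isometric
affine automorphism, different from the identity, fixing `H` pointwise. -/
def IsReflectionAcross (H : AffineSubspace ℝ E) (g : E ≃ᵃ[ℝ] E) : Prop :=
  Isometry g ∧ (∀ x ∈ H, g x = x) ∧ g ≠ AffineEquiv.refl ℝ E

/-- The group `W_𝓗` generated by the reflections across the hyperplanes of `𝓗`. -/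
def reflGroup (𝓗 : Set (AffineSubspace ℝ E)) : Subgroup (E ≃ᵃ[ℝ] E) :=
  Subgroup.closure {g | ∃ H ∈ 𝓗, IsReflectionAcross H g}

/-- `𝓗` is admissible: `W_𝓗` (a discrete group) acts properly on `E` and preserves `𝓗`. -/
def Admissible (𝓗 : Set (AffineSubspace ℝ E)) : Prop :=
  (∀ w ∈ reflGroup 𝓗, ∀ H ∈ 𝓗, H.map w.toAffineMap ∈ 𝓗) ∧
  (∀ s t : Set E, IsCompact s → IsCompact t →
    {w : E ≃ᵃ[ℝ] E | w ∈ reflGroup 𝓗 ∧ (⇑w '' s ∩ t).Nonempty}.Finite)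

/-- A chamber of `𝓗`: a connected component of the complement of the union of the
hyperplanes. -/
def IsChamber (𝓗 : Set (AffineSubspace ℝ E)) (C : Set E) : Prop :=
  ∃ x ∈ (⋃ H ∈ 𝓗, (H : Set E))ᶜ, C = connectedComponentIn (⋃ H ∈ 𝓗, (H : Set E))ᶜ x

/-- A flat of `𝓗`: a nonempty intersection of hyperplanes of `𝓗`. -/
def IsFlat (𝓗 : Set (AffineSubspace ℝ E)) (L : AffineSubspace ℝ E) : Prop :=
  (L : Set E).Nonempty ∧ ∃ S ⊆ 𝓗, L = sInf S

/-- The flat `L` lies over the fundamental domain `A` if `L` is the affine span of `L ∩ A`. -/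
def LiesOver (L : AffineSubspace ℝ E) (A : Set E) : Prop :=
  L = affineSpan ℝ ((L : Set E) ∩ A)

end ArrangementSetup

/-!
Fix a point `x` of the chamber and orient the unit normals of the hyperplanes so that `x` has
positive height over each of them. The chamber is then the cell where all heights are positive and
its closure the cell where all are nonnegative. By Baire's theorem the flat `L'` contains a point
`p` lying on no hyperplane except those containing `L'`. Properness of the action leaves only
finitely many points of the orbit of `p` near `x`, so some `w p` is closest to `x`; the reflection
across a hyperplane separating `w p` from `x` would move it closer, hence `w p` lies in the closed
chamber. The hyperplanes through `w p` contain `w L'`, and by local finiteness all others avoid a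
small ball around `w p`, so `w L'` meets the closed chamber in a neighbourhood of `w p` in `w L'`,
which spans `w L'`.
-/

open scoped RealInnerProductSpace
open Metric Topology

section UnitNormal

variable {V : Type*} [NormedAddCommGroup V] [InnerProductSpace ℝ V]
variable {E : Type*} [MetricSpace E] [NormedAddTorsor V E]

structure UnitNormal (H : AffineSubspace ℝ E) where
  base : E
  normal : V
  norm_normal : ‖normal‖ = 1
  mem_iff : ∀ y, y ∈ H ↔ ⟪normal, y -ᵥ base⟫ = 0

namespace UnitNormal

variable {H : AffineSubspace ℝ E} (n : UnitNormal H)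

def height (y : E) : ℝ := ⟪n.normal, y -ᵥ n.base⟫

lemma height_eq_zero_iff {y : E} : n.height y = 0 ↔ y ∈ H := (n.mem_iff y).symm

lemma continuous_height : Continuous n.height :=
  continuous_const.inner (continuous_id.vsub continuous_const)

lemma height_lineMap (a b : E) (t : ℝ) :
    n.height (AffineMap.lineMap a b t) = n.height a + t * (n.height b - n.height a) := by
  simp only [height, AffineMap.lineMap_apply, vadd_vsub_assoc, inner_add_right,
    real_inner_smul_right, ← inner_sub_right, vsub_sub_vsub_cancel_right, add_comm]

def neg : UnitNormal H where
  base := n.base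
  normal := -n.normal
  norm_normal := by rw [norm_neg, n.norm_normal]
  mem_iff y := by rw [n.mem_iff, inner_neg_left, neg_eq_zero]

@[simp] lemma height_neg (y : E) : n.neg.height y = -n.height y := inner_neg_left _ _

noncomputable def reflection : E ≃ᵃⁱ[ℝ] E :=
  ((AffineIsometryEquiv.vaddConst ℝ n.base).symm.trans
    (ℝ ∙ n.normal)ᗮ.reflection.toAffineIsometryEquiv).trans
    (AffineIsometryEquiv.vaddConst ℝ n.base)

lemma reflection_apply (y : E) :
    n.reflection y = (-(2 * n.height y)) • n.normal +ᵥ y := by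
  have hR (v : V) :
      (ℝ ∙ n.normal)ᗮ.reflection v = v - (2 * ⟪n.normal, v⟫) • n.normal := by
    rw [Submodule.reflection_orthogonal_apply, Submodule.reflection_singleton_apply,
      n.norm_normal]
    module
  simp only [reflection, AffineIsometryEquiv.coe_trans, Function.comp_apply,
    AffineIsometryEquiv.coe_vaddConst_symm, AffineIsometryEquiv.coe_vaddConst,
    LinearIsometryEquiv.coe_toAffineIsometryEquiv, hR, height]
  rw [sub_eq_neg_add, ← neg_smul, add_vadd, vsub_vadd]

lemma normal_ne_zero : n.normal ≠ 0 := norm_ne_zero_iff.mp (n.norm_normal ▸ one_ne_zero)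

lemma reflection_eq_self_iff {y : E} : n.reflection y = y ↔ y ∈ H := by
  rw [reflection_apply, ← n.height_eq_zero_iff, eq_comm, eq_vadd_iff_vsub_eq, vsub_self,
    eq_comm, smul_eq_zero_iff_left n.normal_ne_zero]
  constructor <;> intro h <;> linarith

lemma isReflectionAcross : IsReflectionAcross H n.reflection.toAffineEquiv := by
  refine ⟨n.reflection.isometry, fun y hy => n.reflection_eq_self_iff.2 hy, fun h => ?_⟩
  have hfix : n.reflection (n.normal +ᵥ n.base) = n.normal +ᵥ n.base :=
    congrArg (· (n.normal +ᵥ n.base)) h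
  have hheight := (n.height_eq_zero_iff).2 (n.reflection_eq_self_iff.1 hfix)
  rw [height, vadd_vsub, real_inner_self_eq_norm_sq, n.norm_normal] at hheight
  norm_num at hheight

lemma dist_reflection_sq (y c : E) :
    dist (n.reflection y) c ^ 2 = dist y c ^ 2 + 4 * n.height y * n.height c := by
  have hyc : ⟪n.normal, y -ᵥ c⟫ = n.height y - n.height c := by
    rw [height, height, ← inner_sub_right, vsub_sub_vsub_cancel_right]
  rw [dist_eq_norm_vsub V, dist_eq_norm_vsub V, reflection_apply, vadd_vsub_assoc,
    norm_add_sq_real, norm_smul, real_inner_smul_left, hyc, n.norm_normal, Real.norm_eq_abs,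
    mul_one, sq_abs]
  ring

lemma dist_reflection_lt {y c : E} (h : n.height y * n.height c < 0) :
    dist (n.reflection y) c < dist y c := by
  refine lt_of_pow_lt_pow_left₀ 2 dist_nonneg ?_
  rw [n.dist_reflection_sq]
  linarith

lemma reflection_mem_reflGroup {𝓗 : Set (AffineSubspace ℝ E)} (hH : H ∈ 𝓗) :
    n.reflection.toAffineEquiv ∈ reflGroup 𝓗 :=
  Subgroup.subset_closure ⟨H, hH, n.isReflectionAcross⟩

lemma height_nonneg_of_forall_dist_le {𝓗 : Set (AffineSubspace ℝ E)} (hH : H ∈ 𝓗)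
    {q x : E} (hx : 0 < n.height x) (hq : ∀ w ∈ reflGroup 𝓗, dist q x ≤ dist (w q) x) :
    0 ≤ n.height q := by
  by_contra! hneg
  exact (n.dist_reflection_lt (mul_neg_of_neg_of_pos hneg hx)).not_ge
    (hq _ (n.reflection_mem_reflGroup hH))

end UnitNormal

lemma IsAffineHyperplane.exists_unitNormal [FiniteDimensional ℝ V] {H : AffineSubspace ℝ E}
    (hH : IsAffineHyperplane (V := V) H) : Nonempty (UnitNormal H) := by
  obtain ⟨⟨p, hp⟩, hrank⟩ := hH
  have hne : H.directionᗮ ≠ ⊥ := by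
    rw [ne_eq, Submodule.orthogonal_eq_bot_iff]
    rintro htop
    rw [htop, finrank_top] at hrank
    omega
  obtain ⟨v, hv, hv0⟩ := Submodule.exists_mem_ne_zero_of_ne_bot hne
  set u := ‖v‖⁻¹ • v
  have hu : ‖u‖ = 1 := norm_smul_inv_norm hv0
  have hdir : H.direction = (ℝ ∙ u)ᗮ := by
    refine Submodule.eq_of_le_of_finrank_le ?_ ?_
    · rw [Submodule.le_orthogonal_iff_le_orthogonal, Submodule.span_singleton_le_iff_mem]
      exact Submodule.smul_mem _ _ hv
    · have := (ℝ ∙ u).finrank_add_finrank_orthogonal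
      rw [finrank_span_singleton (norm_ne_zero_iff.mp (hu ▸ one_ne_zero))] at this
      omega
  refine ⟨⟨p, u, hu, fun y => ?_⟩⟩
  rw [← AffineSubspace.vsub_right_mem_direction_iff_mem hp, hdir,
    Submodule.mem_orthogonal_singleton_iff_inner_right]

lemma IsAffineHyperplane.exists_unitNormal_height_pos [FiniteDimensional ℝ V]
    {H : AffineSubspace ℝ E} (hH : IsAffineHyperplane (V := V) H) {x : E} (hx : x ∉ H) :
    ∃ n : UnitNormal H, 0 < n.height x := by
  obtain ⟨n⟩ := hH.exists_unitNormal
  have hx0 : n.height x ≠ 0 := fun h => hx (n.height_eq_zero_iff.1 h)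
  rcases hx0.lt_or_gt with hneg | hpos
  · exact ⟨n.neg, by rw [UnitNormal.height_neg]; linarith⟩
  · exact ⟨n, hpos⟩

end UnitNormal

section AffineTopology

variable {V : Type*} [NormedAddCommGroup V] [NormedSpace ℝ V]
variable {E : Type*} [MetricSpace E] [NormedAddTorsor V E]

lemma IsPreconnected.pos_of_forall_ne_zero {X : Type*} [TopologicalSpace X] {s : Set X}
    (hs : IsPreconnected s) {f : X → ℝ} (hf : ContinuousOn f s) (hne : ∀ y ∈ s, f y ≠ 0)
    {a b : X} (ha : a ∈ s) (hfa : 0 < f a) (hb : b ∈ s) : 0 < f b := by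
  by_contra! hfb
  obtain ⟨y, hy, hy0⟩ := hs.intermediate_value hb ha hf ⟨hfb, hfa.le⟩
  exact hne y hy hy0

lemma isPreconnected_of_forall_lineMap_mem {s : Set E} (x : E)
    (hs : ∀ y ∈ s, ∀ t ∈ Set.Icc (0 : ℝ) 1, AffineMap.lineMap x y t ∈ s) :
    IsPreconnected s := by
  refine isPreconnected_of_forall x fun y hy => ⟨AffineMap.lineMap x y '' Set.Icc (0 : ℝ) 1,
    ?_, ?_, ?_, isPreconnected_Icc.image _ AffineMap.lineMap_continuous.continuousOn⟩
  · rintro _ ⟨t, ht, rfl⟩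
    exact hs y hy t ht
  · exact ⟨0, Set.left_mem_Icc.2 zero_le_one, AffineMap.lineMap_apply_zero x y⟩
  · exact ⟨1, Set.right_mem_Icc.2 zero_le_one, AffineMap.lineMap_apply_one x y⟩

lemma isPreconnected_ball_of_torsor {V E : Type*} [NormedAddCommGroup V] [NormedSpace ℝ V]
    [MetricSpace E] [NormedAddTorsor V E] (x : E) (ε : ℝ) : IsPreconnected (ball x ε) := by
  rcases lt_or_ge 0 ε with hε | hε
  · refine isPreconnected_of_forall_lineMap_mem x fun y hy t ht => ?_
    rw [mem_ball, dist_lineMap_left, Real.norm_of_nonneg ht.1, dist_comm]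
    exact (mul_le_of_le_one_left dist_nonneg ht.2).trans_lt hy
  · rw [ball_eq_empty.2 hε]
    exact isPreconnected_empty

lemma AffineSubspace.le_affineSpan_inter_ball (L : AffineSubspace ℝ E) {x : E} (hx : x ∈ L)
    {ε : ℝ} (hε : 0 < ε) : L ≤ affineSpan ℝ ((L : Set E) ∩ ball x ε) := by
  intro y hy
  set t : ℝ := ε / (2 * (dist x y + 1))
  have ht : 0 < t := by positivity
  have hz : AffineMap.lineMap x y t ∈ (L : Set E) ∩ ball x ε := by
    refine ⟨AffineMap.lineMap_mem _ hx hy, ?_⟩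
    rw [mem_ball, dist_lineMap_left, Real.norm_of_nonneg ht.le, div_mul_eq_mul_div,
      div_lt_iff₀ (by positivity)]
    nlinarith [dist_nonneg (x := x) (y := y)]
  have hy : y = AffineMap.lineMap x (AffineMap.lineMap x y t) t⁻¹ := by
    rw [AffineMap.lineMap_apply, AffineMap.lineMap_apply, vadd_vsub, smul_smul,
      inv_mul_cancel₀ ht.ne', one_smul, vsub_vadd]
  rw [hy]
  exact AffineMap.lineMap_mem _ (subset_affineSpan ℝ _ ⟨hx, mem_ball_self hε⟩)
    (subset_affineSpan ℝ _ hz)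

instance NormedAddTorsor.properSpace [ProperSpace V] : ProperSpace E := by
  obtain ⟨x⟩ := AddTorsor.nonempty (G := V) (P := E)
  let e := IsometryEquiv.vaddConst (P := E) x
  exact e.isometry.antilipschitz.properSpace e.continuous e.surjective

variable [FiniteDimensional ℝ V]

lemma AffineSubspace.exists_mem_forall_le_of_mem {ι : Type*} [Countable ι]
    (S : ι → AffineSubspace ℝ E) (L : AffineSubspace ℝ E) (hL : (L : Set E).Nonempty) :
    ∃ p ∈ L, ∀ i, p ∈ S i → L ≤ S i := by
  by_contra! hcover
  have : Nonempty L := hL.to_subtype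
  have : CompleteSpace L := L.closed_of_finiteDimensional.completeSpace_coe
  let T : {i // ¬ L ≤ S i} → Set L := fun i => {z | (z : E) ∈ S i}
  have hT : ∀ i, IsClosed (T i) := fun i =>
    (S i).closed_of_finiteDimensional.preimage continuous_subtype_val
  have hU : ⋃ i, T i = Set.univ := Set.eq_univ_of_forall fun z => by
    obtain ⟨i, hzi, hi⟩ := hcover z z.2
    exact Set.mem_iUnion.2 ⟨⟨i, hi⟩, hzi⟩
  obtain ⟨i, z, hz⟩ := nonempty_interior_of_iUnion_of_closed hT hU
  obtain ⟨ε, hε, hball⟩ := Metric.isOpen_iff.1 isOpen_interior z hz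
  refine i.2 ((L.le_affineSpan_inter_ball z.2 hε).trans (affineSpan_le.2 ?_))
  rintro y ⟨hyL, hyb⟩
  have hyT : (⟨y, hyL⟩ : L) ∈ T i := interior_subset (hball hyb)
  exact hyT

end AffineTopology

section Arrangement

variable {V : Type*} [NormedAddCommGroup V] [InnerProductSpace ℝ V]
variable {E : Type*} [MetricSpace E] [NormedAddTorsor V E] {𝓗 : Set (AffineSubspace ℝ E)}

lemma Admissible.forall_map_le_of_mem (hadm : Admissible 𝓗) {w : E ≃ᵃ[ℝ] E}
    (hw : w ∈ reflGroup 𝓗) {L : AffineSubspace ℝ E} {p : E} (hp : ∀ H ∈ 𝓗, p ∈ H → L ≤ H) :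
    ∀ H ∈ 𝓗, w p ∈ H → L.map w.toAffineMap ≤ H := by
  intro H hH hwp
  have hpH : p ∈ H.map w⁻¹.toAffineMap :=
    AffineSubspace.mem_map.2 ⟨w p, hwp, w.symm_apply_apply p⟩
  rw [AffineSubspace.map_le_iff_le_comap]
  intro y hy
  obtain ⟨z, hz, rfl⟩ := AffineSubspace.mem_map.1 (hp _ (hadm.1 _ (inv_mem hw) H hH) hpH hy)
  show w (w.symm z) ∈ H
  rwa [w.apply_symm_apply]

variable (n : (H : 𝓗) → UnitNormal (H : AffineSubspace ℝ E)) {x : E}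

lemma connectedComponentIn_eq_setOf_height_pos (hx : ∀ H, 0 < (n H).height x) :
    connectedComponentIn (⋃ H ∈ 𝓗, (H : Set E))ᶜ x = {y | ∀ H, 0 < (n H).height y} := by
  have hcompl : ∀ y, y ∈ (⋃ H ∈ 𝓗, (H : Set E))ᶜ ↔ ∀ H, (n H).height y ≠ 0 := by
    intro y
    simp [UnitNormal.height_eq_zero_iff]
  refine Set.Subset.antisymm (fun y hy H => ?_) ?_
  · exact isPreconnected_connectedComponentIn.pos_of_forall_ne_zero
      (n H).continuous_height.continuousOn
      (fun z hz => (hcompl z).1 (connectedComponentIn_subset _ _ hz) H)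
      (mem_connectedComponentIn ((hcompl x).2 fun H => (hx H).ne')) (hx H) hy
  · refine (isPreconnected_of_forall_lineMap_mem (s := {y | ∀ H, 0 < (n H).height y}) x
      fun y hy t ht H => ?_).subset_connectedComponentIn hx
      fun y hy => (hcompl y).2 fun H => (hy H).ne'
    rw [UnitNormal.height_lineMap]
    nlinarith [mul_nonneg (sub_nonneg.2 ht.2) (hx H).le, mul_nonneg ht.1 (hy H).le, hx H, hy H]

lemma closure_setOf_height_pos (hx : ∀ H, 0 < (n H).height x) :
    closure {y | ∀ H, 0 < (n H).height y} = {y | ∀ H, 0 ≤ (n H).height y} := by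
  refine (closure_minimal (fun y hy H => (hy H).le) ?_).antisymm fun y hy => ?_
  · simp only [Set.ofPred_forall]
    exact isClosed_iInter fun H => isClosed_le continuous_const (n H).continuous_height
  · have hlim : Filter.Tendsto (AffineMap.lineMap y x : ℝ → E) (𝓝[>] 0) (𝓝 y) := by
      simpa using (AffineMap.lineMap_continuous.continuousAt.continuousWithinAt :
        ContinuousWithinAt (AffineMap.lineMap y x : ℝ → E) (Set.Ioi 0) 0).tendsto
    refine mem_closure_of_tendsto hlim ?_
    filter_upwards [Ioo_mem_nhdsGT one_pos] with t ht H
    rw [UnitNormal.height_lineMap]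
    nlinarith [mul_nonneg (sub_nonneg.2 ht.2.le) (hy H), mul_pos ht.1 (hx H)]

variable [FiniteDimensional ℝ V]

/-- Distinct hyperplanes have distinct reflections, and those meeting a ball `B` are among the
finitely many `w ∈ W_𝓗` with `w B ∩ B ≠ ∅`. -/
lemma Admissible.locallyFinite (hadm : Admissible 𝓗)
    (h𝓗 : ∀ H ∈ 𝓗, IsAffineHyperplane (V := V) H) :
    LocallyFinite (fun H : 𝓗 => (H : Set E)) := by
  intro x
  refine ⟨closedBall x 1, closedBall_mem_nhds x one_pos, ?_⟩
  let g : 𝓗 → E ≃ᵃ[ℝ] E := fun H =>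
    (h𝓗 H H.2).exists_unitNormal.some.reflection.toAffineEquiv
  have hg : ∀ (H : 𝓗) (y : E), g H y = y ↔ y ∈ (H : AffineSubspace ℝ E) := fun H _ =>
    UnitNormal.reflection_eq_self_iff _
  refine Set.Finite.of_finite_image (f := g) ((hadm.2 _ _ (isCompact_closedBall x 1)
    (isCompact_closedBall x 1)).subset ?_) fun H₁ _ H₂ _ h => ?_
  · rintro _ ⟨H, ⟨y, hyH, hyB⟩, rfl⟩
    exact ⟨UnitNormal.reflection_mem_reflGroup _ H.2, y, ⟨y, hyB, (hg H y).2 hyH⟩, hyB⟩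
  · exact Subtype.ext (SetLike.ext fun y => by rw [← hg, ← hg, h])

lemma Admissible.countable (hadm : Admissible 𝓗)
    (h𝓗 : ∀ H ∈ 𝓗, IsAffineHyperplane (V := V) H) : 𝓗.Countable :=
  Set.countable_coe_iff.1 <| Set.countable_univ_iff.1 <|
    (hadm.locallyFinite h𝓗).countable_univ fun H => (h𝓗 H H.2).1

lemma Admissible.exists_forall_dist_le (hadm : Admissible 𝓗) (p x : E) :
    ∃ w ∈ reflGroup 𝓗, ∀ w' ∈ reflGroup 𝓗, dist (w p) x ≤ dist (w' (w p)) x := by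
  let F := {w : E ≃ᵃ[ℝ] E | w ∈ reflGroup 𝓗 ∧ w p ∈ closedBall x (dist p x)}
  have hF : F.Finite := (hadm.2 {p} _ isCompact_singleton (isCompact_closedBall x _)).subset
    fun w hw => ⟨hw.1, w p, Set.mem_image_of_mem w rfl, hw.2⟩
  obtain ⟨w, hwF, hmin⟩ := Set.exists_min_image F (fun w => dist (w p) x) hF
    ⟨1, (reflGroup 𝓗).one_mem, mem_closedBall.2 le_rfl⟩
  refine ⟨w, hwF.1, fun w' hw' => ?_⟩
  by_cases hw'w : w' * w ∈ F
  · exact hmin _ hw'w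
  · exact hwF.2.trans (not_le.1 fun h => hw'w ⟨mul_mem hw' hwF.1, h⟩).le

lemma liesOver_setOf_height_nonneg (hlf : LocallyFinite (fun H : 𝓗 => (H : Set E)))
    {M : AffineSubspace ℝ E} {q : E} (hqM : q ∈ M) (hq : ∀ H, 0 ≤ (n H).height q)
    (hgen : ∀ H ∈ 𝓗, q ∈ H → M ≤ H) :
    LiesOver M {y | ∀ H, 0 ≤ (n H).height y} := by
  obtain ⟨ε, hε, hball⟩ := Metric.eventually_nhds_iff_ball.1
    (hlf.eventually_subset (fun H => H.1.closed_of_finiteDimensional) q)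
  have hsub : (M : Set E) ∩ ball q ε ⊆ {y | ∀ H, 0 ≤ (n H).height y} := by
    rintro y ⟨hyM, hyq⟩ H
    by_cases hqH : q ∈ (H : AffineSubspace ℝ E)
    · exact ((n H).height_eq_zero_iff.2 (hgen H H.2 hqH hyM)).ge
    · have hne : ∀ z ∈ ball q ε, (n H).height z ≠ 0 := fun z hz h0 =>
        hqH (hball z hz ((n H).height_eq_zero_iff.1 h0))
      exact ((isPreconnected_ball_of_torsor q ε).pos_of_forall_ne_zero
        (n H).continuous_height.continuousOn hne (mem_ball_self hε)
        ((hq H).lt_of_ne (hne q (mem_ball_self hε)).symm) hyq).le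
  exact le_antisymm ((M.le_affineSpan_inter_ball hqM hε).trans
    (affineSpan_mono ℝ fun y hy => ⟨hy.1, hsub hy⟩)) (affineSpan_le.2 Set.inter_subset_left)

end Arrangement

/-- Let `𝓗` be an admissible affine hyperplane arrangement in `E` with
fundamental domain `⋀` (the closure of a fixed chamber).  Then every flat `L'` of `𝓗` is
`W_𝓗`-conjugate to a flat lying over `⋀`: there exists `w ∈ W_𝓗` such that `w(L')` equals
the affine span of `w(L') ∩ ⋀`. -/
theorem flat_conjugate_to_flat_lying_over
    {V : Type*} [NormedAddCommGroup V] [InnerProductSpace ℝ V] [FiniteDimensional ℝ V]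
    {E : Type*} [MetricSpace E] [NormedAddTorsor V E]
    (𝓗 : Set (AffineSubspace ℝ E)) (h𝓗 : ∀ H ∈ 𝓗, IsAffineHyperplane (V := V) H)
    (hadm : Admissible 𝓗)
    (C : Set E) (hC : IsChamber 𝓗 C) (A : Set E) (hA : A = closure C)
    (L' : AffineSubspace ℝ E) (hL' : IsFlat 𝓗 L') :
    ∃ w ∈ reflGroup 𝓗, LiesOver (L'.map w.toAffineMap) A := by
  obtain ⟨x, hx, rfl⟩ := hC
  subst hA
  have hxH : ∀ H : 𝓗, x ∉ (H : AffineSubspace ℝ E) := fun H hxH =>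
    hx (Set.mem_biUnion H.2 hxH)
  choose n hn using fun H : 𝓗 => (h𝓗 H H.2).exists_unitNormal_height_pos (hxH H)
  have : Countable 𝓗 := (hadm.countable h𝓗).to_subtype
  obtain ⟨p, hpL, hp⟩ := AffineSubspace.exists_mem_forall_le_of_mem (fun H : 𝓗 => H) L' hL'.1
  obtain ⟨w, hw, hmin⟩ := hadm.exists_forall_dist_le p x
  refine ⟨w, hw, ?_⟩
  rw [connectedComponentIn_eq_setOf_height_pos n hn, closure_setOf_height_pos n hn]
  exact liesOver_setOf_height_nonneg n (hadm.locallyFinite h𝓗)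
    (AffineSubspace.mem_map_of_mem _ hpL)
    (fun H => (n H).height_nonneg_of_forall_dist_le H.2 (hn H) hmin)
    (hadm.forall_map_le_of_mem hw fun H hH => hp ⟨H, hH⟩)
end

section
/- With notation as in the context, the projection W_aff = Q ⋊ W → W restricts to a surjective group homomorphism from Γ = Stab_{W_aff}(L) onto Γ_W = Stab_W(e(L)) whose kernel is the group of translations by vectors in Q ∩ V(L); consequently it induces a group isomorphism Γ/(Q ∩ V(L)) ≅ Γ_W. -/
open scoped Pointwise

/-!
Every element of `W_aff` has the form `v ↦ w v + q` with `w ∈ W` and `q ∈ Q` (`mem_affGroup_iff`),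
so the projection to `W` is the linear part, and its kernel consists of translations.

The substance is surjectivity. If `w ∈ W` preserves `L + Q`, then `w` preserves `V(L)`: for
`u ∈ V(L)` the whole line `ℝ • w u` lies in `V(L) + Q`, and a line not contained in `V(L)` meets
uncountably many cosets of `V(L)`, whereas `Q` is countable, being discrete in a
finite-dimensional space. Writing `w p₀ = x₀ + q₀` with `p₀, x₀ ∈ L` and `q₀ ∈ Q`, the map
`v ↦ w v - q₀` then lies in `W_aff`, sends `p₀` to `x₀` and preserves `V(L)`, so it stabilizes `L`.
-/

instance affineEquivApplyMulAction {k V P : Type*} [Ring k] [AddCommGroup V] [Module k V]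
    [AddTorsor V P] : MulAction (P ≃ᵃ[k] P) P where
  smul g v := g v
  one_smul _ := rfl
  mul_smul _ _ _ := rfl

def affGroup {V : Type*} [NormedAddCommGroup V] [NormedSpace ℝ V]
    (W : Subgroup (V ≃ₗ[ℝ] V)) (Q : AddSubgroup V) : Subgroup (V ≃ᵃ[ℝ] V) :=
  Subgroup.closure
    ({g | ∃ q ∈ Q, ∀ v : V, g v = v + q} ∪ {g | ∃ w ∈ W, ∀ v : V, g v = w v})

namespace AffineEquiv

variable {k V : Type*} [Ring k] [AddCommGroup V] [Module k V]

theorem apply_eq_linear_add (g : V ≃ᵃ[k] V) (v : V) : g v = g.linear v + g 0 :=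
  congrFun (AffineMap.decomp g.toAffineMap) v

theorem linear_eq_of_forall_apply_eq_add {g : V ≃ᵃ[k] V} {w : V ≃ₗ[k] V} {q : V}
    (h : ∀ v, g v = w v + q) : g.linear = w := by
  ext v
  have := g.apply_eq_linear_add v
  simp only [h, map_zero, zero_add, add_left_inj] at this
  exact this.symm

theorem apply_eq_add_of_linear_eq_one {g : V ≃ᵃ[k] V} (hg : g.linear = 1) (v : V) :
    g v = v + g 0 := by
  rw [g.apply_eq_linear_add, hg, LinearEquiv.coe_one, id]

end AffineEquiv

namespace Submodule

variable {V : Type*} [AddCommGroup V] [Module ℝ V]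

theorem mem_of_forall_smul_mem_add_countable (U : Submodule ℝ V) {C : Set V} (hC : C.Countable)
    {v : V} (h : ∀ t : ℝ, t • v ∈ (U : Set V) + C) : v ∈ U := by
  by_contra hv
  choose u hu c hc huc using fun t => Set.mem_add.mp (h t)
  have hinj : Function.Injective fun t => (⟨c t, hc t⟩ : C) := by
    intro t t' htt
    by_contra hne
    have hdiff : (t - t') • v = u t - u t' := by
      rw [sub_smul, ← huc, ← huc, Subtype.mk.inj htt]
      abel
    exact hv ((U.smul_mem_iff (sub_ne_zero.mpr hne)).mp (hdiff ▸ U.sub_mem (hu t) (hu t')))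
  have := hC.to_subtype
  exact not_countable (α := ℝ) hinj.countable

end Submodule

theorem MulAction.smul_mem_of_mem_stabilizer {G α : Type*} [Group G] [MulAction G α] {s : Set α}
    {g : G} (hg : g ∈ stabilizer G s) {x : α} (hx : x ∈ s) : g • x ∈ s :=
  mem_stabilizer_iff.mp hg ▸ Set.smul_mem_smul_set hx

namespace AffineSubspace

variable {V : Type*} [AddCommGroup V] [Module ℝ V] {L : AffineSubspace ℝ V} {Q : AddSubgroup V}

theorem direction_le_comap_of_mapsTo_add (hQ : (Q : Set V).Countable) (hL : (L : Set V).Nonempty)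
    {f : V →ₗ[ℝ] V} (hf : Set.MapsTo f ((L : Set V) + Q) ((L : Set V) + Q)) :
    L.direction ≤ L.direction.comap f := by
  obtain ⟨p₀, hp₀⟩ := hL
  intro u hu
  refine L.direction.mem_of_forall_smul_mem_add_countable hQ fun t => ?_
  have hfL : ∀ x ∈ L, f x ∈ (L : Set V) + Q := fun x hx => hf ⟨x, hx, 0, zero_mem Q, add_zero x⟩
  obtain ⟨p₁, hp₁, q₁, hq₁, h₁⟩ := Set.mem_add.mp <|
    hfL (t • u +ᵥ p₀) (vadd_mem_of_mem_direction (L.direction.smul_mem t hu) hp₀)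
  obtain ⟨p₂, hp₂, q₂, hq₂, h₂⟩ := Set.mem_add.mp (hfL p₀ hp₀)
  refine Set.mem_add.mpr ⟨p₁ -ᵥ p₂, vsub_mem_direction hp₁ hp₂, q₁ - q₂, sub_mem hq₁ hq₂, ?_⟩
  rw [vadd_eq_add] at h₁
  rw [← map_smul, ← add_sub_cancel_right (t • u) p₀, map_sub, ← h₁, ← h₂, vsub_eq_sub]
  abel

theorem map_direction_eq_of_mem_stabilizer (hQ : (Q : Set V).Countable)
    (hL : (L : Set V).Nonempty) {w : V ≃ₗ[ℝ] V}
    (hw : w ∈ MulAction.stabilizer (V ≃ₗ[ℝ] V) ((L : Set V) + Q)) :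
    L.direction.map (w : V →ₗ[ℝ] V) = L.direction := by
  have hle : ∀ w' ∈ MulAction.stabilizer (V ≃ₗ[ℝ] V) ((L : Set V) + Q),
      L.direction ≤ L.direction.comap (w' : V →ₗ[ℝ] V) := fun w' hw' =>
    direction_le_comap_of_mapsTo_add hQ hL fun _ => MulAction.smul_mem_of_mem_stabilizer hw'
  refine le_antisymm (Submodule.map_le_iff_le_comap.mpr (hle w hw)) ?_
  rw [Submodule.map_equiv_eq_comap_symm]
  exact hle w⁻¹ (inv_mem hw)

end AffineSubspace

section AffGroup

variable {V : Type*} [NormedAddCommGroup V] [NormedSpace ℝ V] {W : Subgroup (V ≃ₗ[ℝ] V)}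
  {Q : AddSubgroup V}

theorem mem_affGroup_iff (hQW : ∀ w ∈ W, ∀ q ∈ Q, w q ∈ Q) {g : V ≃ᵃ[ℝ] V} :
    g ∈ affGroup W Q ↔ g.linear ∈ W ∧ g 0 ∈ Q := by
  constructor
  · intro hg
    induction hg using Subgroup.closure_induction with
    | mem g hg =>
      rcases hg with ⟨q, hq, hg⟩ | ⟨w, hw, hg⟩
      · rw [AffineEquiv.linear_eq_of_forall_apply_eq_add (w := 1) hg, hg, zero_add]
        exact ⟨one_mem W, hq⟩
      · rw [AffineEquiv.linear_eq_of_forall_apply_eq_add (q := 0) (by simpa using hg), hg,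
          map_zero]
        exact ⟨hw, zero_mem Q⟩
    | one => exact ⟨one_mem W, zero_mem Q⟩
    | mul x y _ _ hx hy =>
      refine ⟨show AffineEquiv.linearHom (x * y) ∈ W by
        rw [map_mul]; exact mul_mem hx.1 hy.1, ?_⟩
      rw [AffineEquiv.coe_mul, Function.comp_apply, AffineEquiv.apply_eq_linear_add x]
      exact add_mem (hQW _ hx.1 _ hy.2) hx.2
    | inv x _ hx =>
      refine ⟨show AffineEquiv.linearHom x⁻¹ ∈ W by rw [map_inv]; exact inv_mem hx.1, ?_⟩
      have h0 := x.symm.apply_eq_linear_add (x 0)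
      rw [x.symm_apply_apply, AffineEquiv.linear_symm, eq_comm, add_eq_zero_iff_neg_eq] at h0
      rw [AffineEquiv.inv_def, ← h0]
      exact neg_mem (hQW _ (inv_mem hx.1) _ hx.2)
  · rintro ⟨hw, hq⟩
    have hg : g = AffineEquiv.constVAdd ℝ V (g 0) * g.linear.toAffineEquiv := by
      ext v
      simp [g.apply_eq_linear_add v, add_comm]
    rw [hg]
    exact mul_mem (Subgroup.subset_closure (Or.inl ⟨g 0, hq, fun v => add_comm _ _⟩))
      (Subgroup.subset_closure (Or.inr ⟨g.linear, hw, fun v => rfl⟩))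

theorem linear_smul_add_subset (hQW : ∀ w ∈ W, ∀ q ∈ Q, w q ∈ Q) {g : V ≃ᵃ[ℝ] V}
    (hg : g ∈ affGroup W Q) {s : Set V} (hs : g • s = s) : g.linear • (s + Q) ⊆ s + Q := by
  obtain ⟨hw, h0⟩ := (mem_affGroup_iff hQW).mp hg
  rintro _ ⟨_, ⟨p, hp, q, hq, rfl⟩, rfl⟩
  refine Set.mem_add.mpr ⟨g p, hs ▸ Set.smul_mem_smul_set hp, g.linear q - g 0,
    sub_mem (hQW _ hw q hq) h0, ?_⟩
  rw [g.apply_eq_linear_add p]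
  change _ = g.linear (p + q)
  rw [map_add]
  abel

theorem exists_mem_affGroup_smul_eq_linear_eq (hQW : ∀ w ∈ W, ∀ q ∈ Q, w q ∈ Q)
    (hQ : (Q : Set V).Countable) {L : AffineSubspace ℝ V} (hL : (L : Set V).Nonempty)
    {w : V ≃ₗ[ℝ] V} (hw : w ∈ W)
    (hwL : w ∈ MulAction.stabilizer (V ≃ₗ[ℝ] V) ((L : Set V) + Q)) :
    ∃ g ∈ affGroup W Q, g • (L : Set V) = L ∧ g.linear = w := by
  obtain ⟨p₀, hp₀⟩ := hL
  have hp₀Q : p₀ ∈ (L : Set V) + Q := Set.mem_add.mpr ⟨p₀, hp₀, 0, zero_mem Q, add_zero p₀⟩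
  obtain ⟨x₀, hx₀, q₀, hq₀, hwp₀⟩ := Set.mem_add.mp (show w p₀ ∈ (L : Set V) + Q from
    MulAction.smul_mem_of_mem_stabilizer hwL hp₀Q)
  set g := AffineEquiv.constVAdd ℝ V (-q₀) * w.toAffineEquiv
  have hg : ∀ v, g v = w v + -q₀ := fun v => by simp [g, add_comm]
  have hlin : g.linear = w := AffineEquiv.linear_eq_of_forall_apply_eq_add hg
  have hgL : L.map g.toAffineMap = L := by
    refine AffineSubspace.ext_of_direction_eq ?_ ⟨x₀, ⟨p₀, hp₀, ?_⟩, hx₀⟩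
    · rw [AffineSubspace.map_direction, AffineEquiv.linear_toAffineMap, hlin]
      exact AffineSubspace.map_direction_eq_of_mem_stabilizer hQ ⟨p₀, hp₀⟩ hwL
    · simp [hg, ← hwp₀]
  refine ⟨g, (mem_affGroup_iff hQW).mpr ⟨hlin ▸ hw, ?_⟩, ?_, hlin⟩
  · simpa [hg] using neg_mem hq₀
  · exact (AffineSubspace.coe_map _ L).symm.trans (congrArg SetLike.coe hgL)

end AffGroup

theorem stabilizer_projection_iso_general
    {V : Type*} [NormedAddCommGroup V] [NormedSpace ℝ V] [FiniteDimensional ℝ V]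
    (W : Subgroup (V ≃ₗ[ℝ] V))
    (Q : AddSubgroup V) (hQdisc : DiscreteTopology Q)
    (hQW : ∀ w ∈ W, ∀ q ∈ Q, (w : V ≃ₗ[ℝ] V) q ∈ Q)
    (L : AffineSubspace ℝ V) (hLne : (L : Set V).Nonempty) :
    (let Γ : Subgroup (V ≃ᵃ[ℝ] V) :=
       affGroup W Q ⊓ MulAction.stabilizer (V ≃ᵃ[ℝ] V) (L : Set V)
     let ΓW : Subgroup (V ≃ₗ[ℝ] V) :=
       W ⊓ MulAction.stabilizer (V ≃ₗ[ℝ] V)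
         ((QuotientAddGroup.mk : V → V ⧸ Q) ⁻¹'
           ((QuotientAddGroup.mk : V → V ⧸ Q) '' (L : Set V)))
     let ρ : ↥Γ →* (V ≃ₗ[ℝ] V) := AffineEquiv.linearHom.comp Γ.subtype
     -- `ρ` maps `Γ` onto `Γ_W`
     ρ.range = ΓW ∧
     -- the kernel of `ρ` consists of the translations by vectors of `Q ∩ V(L)`
     (∀ g : ↥Γ, g ∈ ρ.ker ↔
        ∃ q ∈ Q, q ∈ L.direction ∧ ∀ v : V, (g : V ≃ᵃ[ℝ] V) v = v + q) ∧
     -- consequently `Γ/(Q ∩ V(L)) ≅ Γ_W`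
     Nonempty ((↥Γ ⧸ ρ.ker) ≃* ↥ΓW)) := by
  intro Γ ΓW ρ
  have hQ : (Q : Set V).Countable := (HereditarilyLindelofSpace.isLindelof _).countable hQdisc
  have hrange : ρ.range = ΓW := by
    rw [show ΓW = W ⊓ MulAction.stabilizer (V ≃ₗ[ℝ] V) ((L : Set V) + Q) by
      rw [← QuotientAddGroup.preimage_image_mk_eq_add]]
    refine le_antisymm (le_inf ?_ ?_) fun w ⟨hw, hwL⟩ => ?_
    · rintro _ ⟨γ, rfl⟩
      exact ((mem_affGroup_iff hQW).mp γ.2.1).1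
    · refine (MulAction.le_stabilizer_iff_smul_le _ _).mpr ?_
      rintro _ ⟨γ, rfl⟩
      exact linear_smul_add_subset hQW γ.2.1 γ.2.2
    · obtain ⟨g, hg, hgL, rfl⟩ := exists_mem_affGroup_smul_eq_linear_eq hQW hQ hLne hw hwL
      exact ⟨⟨g, hg, hgL⟩, rfl⟩
  refine ⟨hrange, fun g => ⟨fun hg => ?_, fun ⟨q, _, _, hgq⟩ => ?_⟩,
    ⟨(QuotientGroup.quotientKerEquivRange ρ).trans (MulEquiv.subgroupCongr hrange)⟩⟩
  · obtain ⟨p₀, hp₀⟩ := hLne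
    have hgv := AffineEquiv.apply_eq_add_of_linear_eq_one (g := (g : V ≃ᵃ[ℝ] V)) hg
    refine ⟨_, ((mem_affGroup_iff hQW).mp g.2.1).2, ?_, hgv⟩
    have hgp₀ : (g : V ≃ᵃ[ℝ] V) p₀ ∈ L := MulAction.smul_mem_of_mem_stabilizer g.2.2 hp₀
    rwa [hgv, add_comm, ← vadd_eq_add, L.vadd_mem_iff_mem_direction _ hp₀] at hgp₀
  · exact AffineEquiv.linear_eq_of_forall_apply_eq_add (w := 1) hgq

set_option synthInstance.maxHeartbeats 1000000 in
set_option maxHeartbeats 1000000 in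
/-- Let `W` be a finite subgroup of `GL(V)`, `Q` a `W`-stable lattice in
`V`, `W_aff = Q ⋊ W` acting affinely on `V`, `e : V → V/Q` the quotient map, and `L` an
affine subspace whose direction is spanned by `Q ∩ V(L)`.  Then the projection
`W_aff = Q ⋊ W → W` restricts to a surjective group homomorphism from
`Γ = Stab_{W_aff}(L)` onto `Γ_W = Stab_W(e(L))` whose kernel is the group of translations
by vectors in `Q ∩ V(L)`; consequently it induces a group isomorphism
`Γ/(Q ∩ V(L)) ≅ Γ_W`. -/
theorem stabilizer_projection_iso
    {V : Type*} [NormedAddCommGroup V] [NormedSpace ℝ V] [FiniteDimensional ℝ V]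
    (W : Subgroup (V ≃ₗ[ℝ] V)) (hWfin : (W : Set (V ≃ₗ[ℝ] V)).Finite)
    (Q : AddSubgroup V) (hQdisc : DiscreteTopology Q)
    (hQW : ∀ w ∈ W, ∀ q ∈ Q, (w : V ≃ₗ[ℝ] V) q ∈ Q)
    (L : AffineSubspace ℝ V) (hLne : (L : Set V).Nonempty)
    (hLspan : Submodule.span ℝ ((Q : Set V) ∩ (L.direction : Set V)) = L.direction) :
    (let Γ : Subgroup (V ≃ᵃ[ℝ] V) :=
       affGroup W Q ⊓ MulAction.stabilizer (V ≃ᵃ[ℝ] V) (L : Set V)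
     let ΓW : Subgroup (V ≃ₗ[ℝ] V) :=
       W ⊓ MulAction.stabilizer (V ≃ₗ[ℝ] V)
         ((QuotientAddGroup.mk : V → V ⧸ Q) ⁻¹'
           ((QuotientAddGroup.mk : V → V ⧸ Q) '' (L : Set V)))
     let ρ : ↥Γ →* (V ≃ₗ[ℝ] V) := AffineEquiv.linearHom.comp Γ.subtype
     -- `ρ` maps `Γ` onto `Γ_W`
     ρ.range = ΓW ∧
     -- the kernel of `ρ` consists of the translations by vectors of `Q ∩ V(L)`
     (∀ g : ↥Γ, g ∈ ρ.ker ↔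
        ∃ q ∈ Q, q ∈ L.direction ∧ ∀ v : V, (g : V ≃ᵃ[ℝ] V) v = v + q) ∧
     -- consequently `Γ/(Q ∩ V(L)) ≅ Γ_W`
     Nonempty ((↥Γ ⧸ ρ.ker) ≃* ↥ΓW)) :=
  stabilizer_projection_iso_general W Q hQdisc hQW L hLne
end

section
/- With notation as in the context, the quotient map e : V → V/Q induces a bijection from the set of Γ-orbits on L onto the set of Γ_W-orbits on e(L), where Γ = Stab_{W_aff}(L) and Γ_W = Stab_W(e(L)). -/
open scoped Pointwise

/-- Characterization of the elements of `affGroup W Q`: they are exactly the maps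
`v ↦ w v + q` with `w ∈ W` and `q ∈ Q`. -/
theorem mem_affGroup_iff_s3 {V : Type*} [NormedAddCommGroup V] [NormedSpace ℝ V]
    (W : Subgroup (V ≃ₗ[ℝ] V)) (Q : AddSubgroup V)
    (hQW : ∀ w ∈ W, ∀ q ∈ Q, (w : V ≃ₗ[ℝ] V) q ∈ Q) (g : V ≃ᵃ[ℝ] V) :
    g ∈ affGroup W Q ↔ ∃ w ∈ W, ∃ q ∈ Q, ∀ v, g v = w v + q := by
  constructor
  · intro hg
    induction hg using Subgroup.closure_induction with
    | mem x hx =>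
      rcases hx with ⟨q, hq, hx⟩ | ⟨w, hw, hx⟩
      · exact ⟨1, one_mem _, q, hq, fun v => by simpa using hx v⟩
      · exact ⟨w, hw, 0, zero_mem _, fun v => by simpa using hx v⟩
    | one => exact ⟨1, one_mem _, 0, zero_mem _, fun v => by simp⟩
    | mul x y hx hy ihx ihy =>
      obtain ⟨w, hw, q, hq, hxv⟩ := ihx
      obtain ⟨w', hw', q', hq', hyv⟩ := ihy
      refine ⟨w * w', mul_mem hw hw', w q' + q,
        add_mem (hQW w hw q' hq') hq, fun v => ?_⟩
      have h1 : (x * y) v = x (y v) := rfl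
      rw [h1, hyv, hxv, map_add]
      have h2 : (w * w') v = w (w' v) := rfl
      rw [h2, add_assoc]
    | inv x hx ihx =>
      obtain ⟨w, hw, q, hq, hxv⟩ := ihx
      refine ⟨w⁻¹, inv_mem hw, -(w⁻¹ q), neg_mem (hQW w⁻¹ (inv_mem hw) q hq),
        fun v => ?_⟩
      apply x.injective
      have h1 : x (x⁻¹ v) = v := x.apply_symm_apply v
      rw [h1, hxv]
      have h2 : ∀ u : V, (w⁻¹ : V ≃ₗ[ℝ] V) u = w.symm u := fun _ => rfl
      rw [map_add, map_neg, h2, h2, w.apply_symm_apply, w.apply_symm_apply]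
      abel
  · rintro ⟨w, hw, q, hq, hgv⟩
    have hg : g = AffineEquiv.constVAdd ℝ V q * w.toAffineEquiv := by
      apply AffineEquiv.ext
      intro v
      have h1 : (AffineEquiv.constVAdd ℝ V q * w.toAffineEquiv) v = q + w v := rfl
      rw [h1, hgv, add_comm]
    rw [hg]
    exact mul_mem
      (Subgroup.subset_closure (Or.inl ⟨q, hq, fun v => add_comm q v⟩))
      (Subgroup.subset_closure (Or.inr ⟨w, hw, fun v => rfl⟩))

/-- Baire-category lemma: if a linear automorphism `w` maps the affine subspace `L` into
`L + Q` with `Q` a discrete subgroup, then `w` maps the direction of `L` into itself. -/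
theorem direction_map_le_aux {V : Type*} [NormedAddCommGroup V] [NormedSpace ℝ V]
    [FiniteDimensional ℝ V]
    (Q : AddSubgroup V) (hQdisc : DiscreteTopology Q)
    (L : AffineSubspace ℝ V) (hLne : (L : Set V).Nonempty)
    (w : V ≃ₗ[ℝ] V) (hw : ∀ l ∈ L, ∃ q ∈ Q, w l - q ∈ L) :
    Submodule.map (w : V →ₗ[ℝ] V) L.direction ≤ L.direction := by
  haveI := hQdisc
  haveI : Countable Q :=
    TopologicalSpace.separableSpace_iff_countable.mp inferInstance
  have hLclosed : IsClosed (L : Set V) := L.closed_of_finiteDimensional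
  haveI : Nonempty (L : Set V) := hLne.to_subtype
  haveI : CompleteSpace (L : Set V) := hLclosed.completeSpace_coe
  set s : Set V := (L : Set V) with hs
  have hwc : Continuous (w : V → V) := w.toLinearMap.continuous_of_finiteDimensional
  set C : Q → Set s := fun q => {x : s | w (x : V) - (q : V) ∈ s} with hC
  have hCclosed : ∀ q : Q, IsClosed (C q) := by
    intro q
    have h1 : C q = (fun x : s => w (x : V) - (q : V)) ⁻¹' s := rfl
    rw [h1]
    exact hLclosed.preimage ((hwc.comp continuous_subtype_val).sub continuous_const)
  have hCunion : ⋃ q, C q = Set.univ := by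
    ext x
    simp only [Set.mem_iUnion, Set.mem_univ, iff_true]
    obtain ⟨q, hq, hmem⟩ := hw (x : V) x.2
    exact ⟨⟨q, hq⟩, hmem⟩
  obtain ⟨q, x₀, hx₀⟩ := nonempty_interior_of_iUnion_of_closed hCclosed hCunion
  have hnhds : C q ∈ nhds x₀ := mem_interior_iff_mem_nhds.mp hx₀
  obtain ⟨ε, hε, hball⟩ := Metric.mem_nhds_iff.mp hnhds
  rintro v ⟨d, hd, rfl⟩
  by_cases hd0 : d = 0
  · simp [hd0]
  · set t : ℝ := ε / (2 * ‖d‖) with ht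
    have htpos : 0 < t := div_pos hε (mul_pos two_pos (norm_pos_iff.mpr hd0))
    have hp : t • d +ᵥ (x₀ : V) ∈ L :=
      AffineSubspace.vadd_mem_of_mem_direction (L.direction.smul_mem t hd) x₀.2
    set y : s := ⟨t • d +ᵥ (x₀ : V), hp⟩ with hy
    have hdist : dist y x₀ < ε := by
      have h0 : dist y x₀ = ‖t • d‖ := by
        rw [Subtype.dist_eq, hy]
        show dist (t • d +ᵥ (x₀ : V)) (x₀ : V) = ‖t • d‖
        rw [dist_eq_norm, vadd_eq_add]
        simp
      have hnd : 0 < ‖d‖ := norm_pos_iff.mpr hd0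
      rw [h0, norm_smul, Real.norm_eq_abs, abs_of_pos htpos, ht]
      rw [div_mul_eq_mul_div, mul_comm 2 ‖d‖, ← div_div]
      rw [mul_div_assoc, div_self (ne_of_gt hnd), mul_one]
      linarith
    have hyC : y ∈ C q := hball (by simpa [Metric.mem_ball] using hdist)
    have hx₀C : x₀ ∈ C q := hball (Metric.mem_ball_self hε)
    have h1 : w ((y : V)) - (q : V) ∈ L := hyC
    have h2 : w ((x₀ : V)) - (q : V) ∈ L := hx₀C
    have h3 : (w ((y : V)) - (q : V)) - (w ((x₀ : V)) - (q : V)) ∈ L.direction :=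
      AffineSubspace.vsub_mem_direction h1 h2
    have h4 : (w ((y : V)) - (q : V)) - (w ((x₀ : V)) - (q : V)) = t • w d := by
      have h5 : (y : V) = t • d + (x₀ : V) := rfl
      rw [h5, map_add, map_smul]
      abel
    rw [h4] at h3
    have h5 : w d = t⁻¹ • (t • w d) := by
      rw [smul_smul, inv_mul_cancel₀ (ne_of_gt htpos), one_smul]
    show w d ∈ L.direction
    rw [h5]
    exact L.direction.smul_mem _ h3

set_option synthInstance.maxHeartbeats 1000000 in
set_option maxHeartbeats 1000000 in
/-- Let `W` be a finite subgroup of `GL(V)`, `Q` a `W`-stable lattice in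
`V`, `W_aff = Q ⋊ W` acting affinely on `V`, `e : V → V/Q` the quotient map, and `L` an
affine subspace whose direction is spanned by `Q ∩ V(L)`.  Then the quotient map
`e : V → V/Q` induces a bijection from the set of `Γ`-orbits on `L` onto the set of
`Γ_W`-orbits on `e(L)`, where `Γ = Stab_{W_aff}(L)` and `Γ_W = Stab_W(e(L))` (the latter
acting on `V/Q` via `w • e(l) = e(w l)`). -/
theorem orbit_bijection_mod_lattice
    {V : Type*} [NormedAddCommGroup V] [NormedSpace ℝ V] [FiniteDimensional ℝ V]
    (W : Subgroup (V ≃ₗ[ℝ] V)) (hWfin : (W : Set (V ≃ₗ[ℝ] V)).Finite)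
    (Q : AddSubgroup V) (hQdisc : DiscreteTopology Q)
    (hQW : ∀ w ∈ W, ∀ q ∈ Q, (w : V ≃ₗ[ℝ] V) q ∈ Q)
    (L : AffineSubspace ℝ V) (hLne : (L : Set V).Nonempty)
    (hLspan : Submodule.span ℝ ((Q : Set V) ∩ (L.direction : Set V)) = L.direction) :
    (let Γ : Subgroup (V ≃ᵃ[ℝ] V) :=
       affGroup W Q ⊓ MulAction.stabilizer (V ≃ᵃ[ℝ] V) (L : Set V)
     let ΓW : Subgroup (V ≃ₗ[ℝ] V) :=
       W ⊓ MulAction.stabilizer (V ≃ₗ[ℝ] V)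
         ((QuotientAddGroup.mk : V → V ⧸ Q) ⁻¹'
           ((QuotientAddGroup.mk : V → V ⧸ Q) '' (L : Set V)))
     let e : V → V ⧸ Q := QuotientAddGroup.mk
     -- the map sending the `Γ`-orbit of `l` to the `Γ_W`-orbit of `e(l)` is well defined
     -- and injective on orbits ...
     (∀ l ∈ (L : Set V), ∀ l' ∈ (L : Set V),
        ((∃ g ∈ Γ, (g : V ≃ᵃ[ℝ] V) l = l') ↔
          (∃ w ∈ ΓW, e ((w : V ≃ₗ[ℝ] V) l) = e l'))) ∧
     -- ... hence the two orbit sets are in bijection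
     Nonempty
       ({S : Set V // ∃ l ∈ (L : Set V), S = {x | ∃ g ∈ Γ, (g : V ≃ᵃ[ℝ] V) l = x}} ≃
        {T : Set (V ⧸ Q) // ∃ l ∈ (L : Set V),
           T = {z | ∃ w ∈ ΓW, e ((w : V ≃ₗ[ℝ] V) l) = z}})) := by
  intro Γ ΓW e
  set S : Set V :=
    (QuotientAddGroup.mk : V → V ⧸ Q) ⁻¹'
      ((QuotientAddGroup.mk : V → V ⧸ Q) '' (L : Set V)) with hSdef
  -- basic facts about the quotient map
  have heq : ∀ a b : V, e a = e b ↔ b - a ∈ Q := by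
    intro a b
    rw [show e a = (a : V ⧸ Q) from rfl, show e b = (b : V ⧸ Q) from rfl,
      QuotientAddGroup.eq, neg_add_eq_sub]
  have hSmem : ∀ x : V, x ∈ S ↔ ∃ m ∈ (L : Set V), x - m ∈ Q := by
    intro x
    constructor
    · rintro ⟨m, hm, hme⟩
      exact ⟨m, hm, (heq m x).mp hme⟩
    · rintro ⟨m, hm, hq⟩
      exact ⟨m, hm, (heq m x).mpr hq⟩
  have hSL : (L : Set V) ⊆ S := fun x hx => (hSmem x).mpr ⟨x, hx, by simpa using Q.zero_mem⟩
  -- membership characterizations for the two stabilizer subgroups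
  have hΓdef : ∀ g : V ≃ᵃ[ℝ] V,
      g ∈ Γ ↔ g ∈ affGroup W Q ∧ g • (L : Set V) = (L : Set V) := by
    intro g
    constructor
    · intro h
      have h' : g ∈ affGroup W Q ⊓ MulAction.stabilizer (V ≃ᵃ[ℝ] V) (L : Set V) := h
      exact ⟨(Subgroup.mem_inf.mp h').1,
        MulAction.mem_stabilizer_iff.mp (Subgroup.mem_inf.mp h').2⟩
    · intro h
      exact Subgroup.mem_inf.mpr ⟨h.1, MulAction.mem_stabilizer_iff.mpr h.2⟩
  have hΓWdef : ∀ u : V ≃ₗ[ℝ] V, u ∈ ΓW ↔ u ∈ W ∧ u • S = S := by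
    intro u
    constructor
    · intro h
      have h' : u ∈ W ⊓ MulAction.stabilizer (V ≃ₗ[ℝ] V) S := h
      exact ⟨(Subgroup.mem_inf.mp h').1,
        MulAction.mem_stabilizer_iff.mp (Subgroup.mem_inf.mp h').2⟩
    · intro h
      exact Subgroup.mem_inf.mpr ⟨h.1, MulAction.mem_stabilizer_iff.mpr h.2⟩
  -- basic consequences of stabilizing a set
  have stab_applyA : ∀ g : V ≃ᵃ[ℝ] V, g • (L : Set V) = (L : Set V) →
      ∀ x ∈ (L : Set V), g x ∈ (L : Set V) := by
    intro g hg x hx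
    have h1 : g • x ∈ g • (L : Set V) := Set.smul_mem_smul_set hx
    rw [hg] at h1
    exact h1
  have stab_surjA : ∀ g : V ≃ᵃ[ℝ] V, g • (L : Set V) = (L : Set V) →
      ∀ y ∈ (L : Set V), ∃ x ∈ (L : Set V), g x = y := by
    intro g hg y hy
    rw [← hg] at hy
    obtain ⟨x, hx, hgx⟩ := Set.mem_smul_set.mp hy
    exact ⟨x, hx, hgx⟩
  -- the key direction-preservation fact via the Baire lemma
  have hdir : ∀ u : V ≃ₗ[ℝ] V, u • S = S →
      Submodule.map (u : V →ₗ[ℝ] V) L.direction = L.direction := by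
    intro u huS
    have hfwd : ∀ l ∈ L, ∃ q ∈ Q, u l - q ∈ L := by
      intro l hl
      have h1 : u • l ∈ u • S := Set.smul_mem_smul_set (hSL hl)
      rw [huS] at h1
      obtain ⟨m, hm, hq⟩ := (hSmem _).mp h1
      refine ⟨u l - m, by simpa using hq, by simpa using hm⟩
    have hbwd : ∀ l ∈ L, ∃ q ∈ Q, u.symm l - q ∈ L := by
      intro l hl
      have h1 : l ∈ u • S := by rw [huS]; exact hSL hl
      obtain ⟨x, hx, hux⟩ := Set.mem_smul_set.mp h1
      have hx' : u.symm l = x := by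
        rw [← hux]; exact u.symm_apply_apply x
      obtain ⟨m, hm, hq⟩ := (hSmem x).mp hx
      exact ⟨x - m, hq, by rw [hx']; simpa using hm⟩
    have h1 := direction_map_le_aux Q hQdisc L hLne u hfwd
    have h2 := direction_map_le_aux Q hQdisc L hLne u.symm hbwd
    apply le_antisymm h1
    intro d hd
    have h3 : u.symm d ∈ L.direction := h2 (Submodule.mem_map.mpr ⟨d, hd, rfl⟩)
    exact Submodule.mem_map.mpr ⟨u.symm d, h3, u.apply_symm_apply d⟩
  -- the central orbit-correspondence equivalence
  have hiff : ∀ l ∈ (L : Set V), ∀ l' ∈ (L : Set V),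
      ((∃ g ∈ Γ, (g : V ≃ᵃ[ℝ] V) l = l') ↔
        (∃ w ∈ ΓW, e ((w : V ≃ₗ[ℝ] V) l) = e l')) := by
    intro l hl l' hl'
    constructor
    · rintro ⟨g, hg, hgl⟩
      obtain ⟨hgaff, hgstab⟩ := (hΓdef g).mp hg
      obtain ⟨w, hwW, q, hq, hgv⟩ := (mem_affGroup_iff_s3 W Q hQW g).mp hgaff
      have hwS : w • S = S := by
        apply subset_antisymm
        · intro y hy
          obtain ⟨x, hx, hwx⟩ := Set.mem_smul_set.mp hy
          obtain ⟨m, hm, hqx⟩ := (hSmem x).mp hx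
          apply (hSmem y).mpr
          refine ⟨g m, stab_applyA g hgstab m hm, ?_⟩
          have h1 : g m = w m + q := hgv m
          have h2 : y - g m = w (x - m) - q := by
            rw [← hwx, h1, map_sub]
            show w x - (w m + q) = w x - w m - q
            abel
          rw [h2]
          exact sub_mem (hQW w hwW _ hqx) hq
        · intro x hx
          apply Set.mem_smul_set.mpr
          refine ⟨w.symm x, ?_, w.apply_symm_apply x⟩
          obtain ⟨m, hm, hqx⟩ := (hSmem x).mp hx
          obtain ⟨m', hm', hgm'⟩ := stab_surjA g hgstab m hm
          apply (hSmem _).mpr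
          refine ⟨m', hm', ?_⟩
          have h2 : m = w m' + q := by rw [← hgm']; exact hgv m'
          have h3 : w.symm m = m' + w.symm q := by
            rw [h2, map_add, w.symm_apply_apply]
          have h4 : w.symm x - m' = w.symm (x - m) + w.symm q := by
            rw [map_sub, h3]; abel
          rw [h4]
          have h5 : ∀ r ∈ Q, w.symm r ∈ Q := fun r hr =>
            hQW w⁻¹ (inv_mem hwW) r hr
          exact add_mem (h5 _ hqx) (h5 _ hq)
      refine ⟨w, (hΓWdef w).mpr ⟨hwW, hwS⟩, ?_⟩
      apply (heq _ _).mpr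
      have h6 : l' - w l = q := by rw [← hgl, hgv l]; abel
      rw [h6]; exact hq
    · rintro ⟨w, hwΓW, hewl⟩
      obtain ⟨hwW, hwS⟩ := (hΓWdef w).mp hwΓW
      have hq : l' - w l ∈ Q := (heq _ _).mp hewl
      have hmapdir := hdir w hwS
      set g : V ≃ᵃ[ℝ] V :=
        AffineEquiv.constVAdd ℝ V (l' - w l) * w.toAffineEquiv with hgdef
      have hgv : ∀ v, g v = w v + (l' - w l) := fun v => add_comm (l' - w l) (w v)
      have hgaff : g ∈ affGroup W Q :=
        (mem_affGroup_iff_s3 W Q hQW g).mpr ⟨w, hwW, l' - w l, hq, hgv⟩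
      have hgl : g l = l' := by
        rw [hgv l]; abel
      have hgstab : g • (L : Set V) = (L : Set V) := by
        apply subset_antisymm
        · intro y hy
          obtain ⟨x, hx, hgx⟩ := Set.mem_smul_set.mp hy
          have hd : x - l ∈ L.direction := AffineSubspace.vsub_mem_direction hx hl
          have hwd : w (x - l) ∈ L.direction := by
            rw [← hmapdir]
            exact Submodule.mem_map.mpr ⟨x - l, hd, rfl⟩
          have hxx : y = w (x - l) +ᵥ l' := by
            rw [← hgx]
            show g x = w (x - l) + l'
            rw [hgv x, map_sub]
            abel
          rw [hxx]
          exact AffineSubspace.vadd_mem_of_mem_direction hwd hl'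
        · intro y hy
          apply Set.mem_smul_set.mpr
          have hd : y - l' ∈ L.direction := AffineSubspace.vsub_mem_direction hy hl'
          have hsd : w.symm (y - l') ∈ L.direction := by
            rw [← hmapdir] at hd
            obtain ⟨du, hdu, hduw⟩ := Submodule.mem_map.mp hd
            have h7 : w.symm (y - l') = du := by
              rw [← hduw]; exact w.symm_apply_apply du
            rw [h7]; exact hdu
          refine ⟨w.symm (y - l') +ᵥ l,
            AffineSubspace.vadd_mem_of_mem_direction hsd hl, ?_⟩
          show g (w.symm (y - l') + l) = y
          rw [hgv, map_add, w.apply_symm_apply]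
          abel
      exact ⟨g, (hΓdef g).mpr ⟨hgaff, hgstab⟩, hgl⟩
  refine ⟨hiff, ?_⟩
  -- orbit equality from one orbit point
  have horb : ∀ l₁ ∈ (L : Set V), ∀ l₂ ∈ (L : Set V),
      (∃ h ∈ Γ, (h : V ≃ᵃ[ℝ] V) l₂ = l₁) →
      {x | ∃ g ∈ Γ, (g : V ≃ᵃ[ℝ] V) l₁ = x} =
        {x | ∃ g ∈ Γ, (g : V ≃ᵃ[ℝ] V) l₂ = x} := by
    rintro l₁ _ l₂ _ ⟨h, hh, hhl⟩
    ext x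
    simp only [Set.mem_setOf_eq]
    constructor
    · rintro ⟨g, hg, rfl⟩
      refine ⟨g * h, mul_mem hg hh, ?_⟩
      show g (h l₂) = g l₁
      rw [hhl]
    · rintro ⟨g, hg, rfl⟩
      refine ⟨g * h⁻¹, mul_mem hg (inv_mem hh), ?_⟩
      show g (h⁻¹ l₁) = g l₂
      congr 1
      rw [← hhl]
      exact h.symm_apply_apply l₂
  -- image of an orbit under `e`
  have himg : ∀ l ∈ (L : Set V),
      e '' {x | ∃ g ∈ Γ, (g : V ≃ᵃ[ℝ] V) l = x} =
        {z | ∃ w ∈ ΓW, e ((w : V ≃ₗ[ℝ] V) l) = z} := by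
    intro l hl
    ext z
    constructor
    · rintro ⟨x, ⟨g, hg, rfl⟩, rfl⟩
      have hgstab := ((hΓdef g).mp hg).2
      have hglL : g l ∈ (L : Set V) := stab_applyA g hgstab l hl
      obtain ⟨w, hw, hew⟩ := (hiff l hl (g l) hglL).mp ⟨g, hg, rfl⟩
      exact ⟨w, hw, hew⟩
    · rintro ⟨w, hw, rfl⟩
      obtain ⟨hwW, hwS⟩ := (hΓWdef w).mp hw
      have h1 : w • l ∈ w • S := Set.smul_mem_smul_set (hSL hl)
      rw [hwS] at h1
      obtain ⟨m, hm, hqm⟩ := (hSmem _).mp h1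
      have hem : e ((w : V ≃ₗ[ℝ] V) l) = e m := by
        apply (heq _ _).mpr
        have : m - (w : V ≃ₗ[ℝ] V) l = -((w : V ≃ₗ[ℝ] V) l - m) := by abel
        rw [this]
        exact neg_mem hqm
      obtain ⟨g, hg, hgl⟩ := (hiff l hl m hm).mpr ⟨w, hw, hem⟩
      exact ⟨m, ⟨g, hg, hgl⟩, hem.symm⟩
  -- build the bijection
  refine ⟨Equiv.ofBijective
    (fun Sx => ⟨e '' Sx.1, by
      obtain ⟨l, hl, hS⟩ := Sx.2
      exact ⟨l, hl, by rw [hS]; exact himg l hl⟩⟩) ⟨?_, ?_⟩⟩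
  · -- injective
    rintro S₁ S₂ hF
    obtain ⟨l₁, hl₁, hS₁⟩ := S₁.2
    obtain ⟨l₂, hl₂, hS₂⟩ := S₂.2
    apply Subtype.ext
    rw [hS₁, hS₂]
    apply horb l₁ hl₁ l₂ hl₂
    have hF1 : e '' S₁.1 = e '' S₂.1 := congrArg Subtype.val hF
    have h1 : e l₁ ∈ e '' S₁.1 := ⟨l₁, by rw [hS₁]; exact ⟨1, one_mem _, rfl⟩, rfl⟩
    rw [hF1, hS₂, himg l₂ hl₂] at h1
    obtain ⟨w, hw, hew⟩ := h1
    exact (hiff l₂ hl₂ l₁ hl₁).mpr ⟨w, hw, hew⟩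
  · -- surjective
    rintro ⟨T, l, hl, hT⟩
    refine ⟨⟨{x | ∃ g ∈ Γ, (g : V ≃ᵃ[ℝ] V) l = x}, l, hl, rfl⟩, ?_⟩
    apply Subtype.ext
    show e '' _ = T
    rw [hT]
    exact himg l hl
end

section
/- Let G be a group acting on a set X, let L ⊆ X, let Γ = Stab_G(L) = {g ∈ G : g·L = L}, and for l ∈ L let G^l be the stabilizer of l and Ω_l := {g·L : g ∈ G, l ∈ g·L}. Then Γ acts on (G·l) ∩ L, G^l acts on Ω_l (by σ·(g·L) = (σg)·L, i.e., by taking images of sets), and there is a bijection between the orbit set ((G·l) ∩ L)/Γ and the orbit set Ω_l/G^l, given by sending the Γ-orbit of g·l ∈ (G·l) ∩ L to the G^l-orbit of g^{-1}·L. -/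
open Pointwise

/-- Two orbit-sets of a subgroup are equal iff the base points are related. -/
private lemma orbit_set_eq_iff' {G X : Type*} [Group G] [MulAction G X] (H : Subgroup G)
    (x y : X) :
    ({z | ∃ γ : G, γ ∈ H ∧ γ • x = z} = {z | ∃ γ : G, γ ∈ H ∧ γ • y = z}) ↔
      ∃ γ : G, γ ∈ H ∧ γ • x = y := by
  constructor
  · intro h
    have hy : y ∈ {z | ∃ γ : G, γ ∈ H ∧ γ • y = z} := ⟨1, H.one_mem, one_smul _ _⟩
    rw [← h] at hy
    exact hy
  · rintro ⟨γ, hγ, rfl⟩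
    ext z
    constructor
    · rintro ⟨δ, hδ, rfl⟩
      exact ⟨δ * γ⁻¹, H.mul_mem hδ (H.inv_mem hγ), by simp [mul_smul]⟩
    · rintro ⟨δ, hδ, rfl⟩
      exact ⟨δ * γ, H.mul_mem hδ hγ, by simp [mul_smul]⟩

/-- The key translation between the two relations. -/
private lemma cross_lemma {G X : Type*} [Group G] [MulAction G X] (L : Set X) (l : X)
    (g₁ g₂ : G) :
    (∃ γ : G, γ • L = L ∧ γ • (g₁ • l) = g₂ • l) ↔
      ∃ σ ∈ MulAction.stabilizer G l, σ • (g₁⁻¹ • L) = g₂⁻¹ • L := by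
  constructor
  · rintro ⟨γ, hγL, hγl⟩
    refine ⟨g₂⁻¹ * γ * g₁, ?_, ?_⟩
    · rw [MulAction.mem_stabilizer_iff, mul_smul, mul_smul, hγl, inv_smul_smul]
    · rw [mul_smul, mul_smul, smul_inv_smul, hγL]
  · rintro ⟨σ, hσ, hσL⟩
    rw [MulAction.mem_stabilizer_iff] at hσ
    refine ⟨g₂ * σ * g₁⁻¹, ?_, ?_⟩
    · rw [mul_smul, mul_smul, hσL, smul_inv_smul]
    · rw [mul_smul, mul_smul, inv_smul_smul, hσ]

/-- Let `G` be a group acting on a set `X`, let `L ⊆ X`, let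
`Γ = Stab_G(L) = {g ∈ G : g·L = L}`, and for `l ∈ L` let `G^l` be the stabilizer of `l`
and `Ω_l := {g·L : g ∈ G, l ∈ g·L}`.  Then `Γ` acts on `(G·l) ∩ L`, `G^l` acts on `Ω_l`,
and there is a bijection between `((G·l) ∩ L)/Γ` and `Ω_l/G^l`, given by sending the
`Γ`-orbit of `g·l ∈ (G·l) ∩ L` to the `G^l`-orbit of `g⁻¹·L`. -/
theorem orbit_inter_flat_bijection {G X : Type*} [Group G] [MulAction G X]
    (L : Set X) (l : X) (hl : l ∈ L) :
    -- `Γ` acts on `(G·l) ∩ L`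
    (∀ γ : G, γ • L = L → ∀ x ∈ MulAction.orbit G l ∩ L, γ • x ∈ MulAction.orbit G l ∩ L) ∧
    -- `G^l` acts on `Ω_l`
    (∀ σ ∈ MulAction.stabilizer G l, ∀ S ∈ {S : Set X | ∃ g : G, S = g • L ∧ l ∈ g • L},
      σ • S ∈ {S : Set X | ∃ g : G, S = g • L ∧ l ∈ g • L}) ∧
    -- the assignment `Γ·(g·l) ↦ G^l·(g⁻¹·L)` is well defined and injective on orbits
    (∀ g₁ g₂ : G, g₁ • l ∈ L → g₂ • l ∈ L →
      ((∃ γ : G, γ • L = L ∧ γ • (g₁ • l) = g₂ • l) ↔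
        (∃ σ ∈ MulAction.stabilizer G l, σ • (g₁⁻¹ • L) = g₂⁻¹ • L))) ∧
    -- it is surjective onto `Ω_l/G^l`
    (∀ S ∈ {S : Set X | ∃ g : G, S = g • L ∧ l ∈ g • L},
      ∃ g : G, g • l ∈ L ∧ ∃ σ ∈ MulAction.stabilizer G l, σ • (g⁻¹ • L) = S) ∧
    -- hence the two orbit sets are in bijection
    Nonempty
      ({T : Set X // ∃ x ∈ MulAction.orbit G l ∩ L, T = {y | ∃ γ : G, γ • L = L ∧ γ • x = y}} ≃
       {U : Set (Set X) // ∃ S : Set X, (∃ g : G, S = g • L ∧ l ∈ g • L) ∧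
          U = {S' | ∃ σ ∈ MulAction.stabilizer G l, σ • S = S'}}) := by
  classical
  -- the two orbit-set equality criteria
  have keyΓ : ∀ x y : X,
      ({z | ∃ γ : G, γ • L = L ∧ γ • x = z} = {z | ∃ γ : G, γ • L = L ∧ γ • y = z}) ↔
        ∃ γ : G, γ • L = L ∧ γ • x = y := by
    intro x y
    have := orbit_set_eq_iff' (MulAction.stabilizer G L) x y
    simpa only [MulAction.mem_stabilizer_iff] using this
  have keyS : ∀ S S' : Set X,
      ({T | ∃ σ ∈ MulAction.stabilizer G l, σ • S = T} =
        {T | ∃ σ ∈ MulAction.stabilizer G l, σ • S' = T}) ↔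
        ∃ σ ∈ MulAction.stabilizer G l, σ • S = S' :=
    fun S S' => orbit_set_eq_iff' (MulAction.stabilizer G l) S S'
  refine ⟨?_, ?_, ?_, ?_, ?_⟩
  · -- Γ acts on (G·l) ∩ L
    rintro γ hγ x ⟨⟨g, rfl⟩, hxL⟩
    refine ⟨⟨γ * g, by simp [mul_smul]⟩, ?_⟩
    rw [← hγ]
    exact Set.smul_mem_smul_set hxL
  · -- G^l acts on Ω_l
    rintro σ hσ S ⟨g, rfl, hlg⟩
    rw [MulAction.mem_stabilizer_iff] at hσ
    refine ⟨σ * g, by simp [mul_smul], ?_⟩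
    rw [mul_smul, ← hσ]
    exact Set.smul_mem_smul_set hlg
  · -- well-definedness / injectivity criterion
    intro g₁ g₂ _ _
    exact cross_lemma L l g₁ g₂
  · -- surjectivity criterion
    rintro S ⟨g, rfl, hlg⟩
    refine ⟨g⁻¹, ?_, 1, one_mem _, by simp⟩
    rwa [← Set.mem_smul_set_iff_inv_smul_mem]
  · -- the bijection
    set A := {T : Set X // ∃ x ∈ MulAction.orbit G l ∩ L,
      T = {y | ∃ γ : G, γ • L = L ∧ γ • x = y}} with hA
    set B := {U : Set (Set X) // ∃ S : Set X, (∃ g : G, S = g • L ∧ l ∈ g • L) ∧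
      U = {S' | ∃ σ ∈ MulAction.stabilizer G l, σ • S = S'}} with hB
    -- choose representatives for A
    have hArep : ∀ T : A, ∃ g : G, g • l ∈ L ∧
        T.1 = {y | ∃ γ : G, γ • L = L ∧ γ • (g • l) = y} := by
      rintro ⟨T, x, ⟨⟨g, rfl⟩, hxL⟩, rfl⟩
      exact ⟨g, hxL, rfl⟩
    choose repA hrepA1 hrepA2 using hArep
    -- choose representatives for B
    have hBrep : ∀ U : B, ∃ g : G, g • l ∈ L ∧
        U.1 = {S' | ∃ σ ∈ MulAction.stabilizer G l, σ • (g⁻¹ • L) = S'} := by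
      rintro ⟨U, S, ⟨g, rfl, hlg⟩, rfl⟩
      refine ⟨g⁻¹, ?_, by simp⟩
      rwa [← Set.mem_smul_set_iff_inv_smul_mem]
    choose repB hrepB1 hrepB2 using hBrep
    -- the forward map
    have memInv : ∀ g : G, g • l ∈ L → l ∈ g⁻¹ • L := by
      intro g h
      rw [Set.mem_smul_set_iff_inv_smul_mem, inv_inv]
      exact h
    refine ⟨⟨fun T => ⟨{S' | ∃ σ ∈ MulAction.stabilizer G l, σ • ((repA T)⁻¹ • L) = S'},
        (repA T)⁻¹ • L, ⟨(repA T)⁻¹, rfl, memInv _ (hrepA1 T)⟩, rfl⟩,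
      fun U => ⟨{y | ∃ γ : G, γ • L = L ∧ γ • (repB U • l) = y},
        repB U • l, ⟨⟨repB U, rfl⟩, hrepB1 U⟩, rfl⟩, ?_, ?_⟩⟩
    · -- left inverse
      intro T
      apply Subtype.ext
      dsimp only
      set U : B := ⟨{S' | ∃ σ ∈ MulAction.stabilizer G l, σ • ((repA T)⁻¹ • L) = S'},
        (repA T)⁻¹ • L, ⟨(repA T)⁻¹, rfl, memInv _ (hrepA1 T)⟩, rfl⟩ with hU
      have h1 : ({S' | ∃ σ ∈ MulAction.stabilizer G l, σ • ((repB U)⁻¹ • L) = S'} : Set (Set X)) =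
          {S' | ∃ σ ∈ MulAction.stabilizer G l, σ • ((repA T)⁻¹ • L) = S'} := by
        rw [← hrepB2 U]
      have h2 : ∃ σ ∈ MulAction.stabilizer G l, σ • ((repB U)⁻¹ • L) = (repA T)⁻¹ • L :=
        (keyS _ _).mp h1
      have h3 : ∃ γ : G, γ • L = L ∧ γ • (repB U • l) = repA T • l :=
        (cross_lemma L l (repB U) (repA T)).mpr h2
      have h4 := (keyΓ (repB U • l) (repA T • l)).mpr h3
      rw [h4, ← hrepA2 T]
    · -- right inverse
      intro U
      apply Subtype.ext
      dsimp only
      set T : A := ⟨{y | ∃ γ : G, γ • L = L ∧ γ • (repB U • l) = y},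
        repB U • l, ⟨⟨repB U, rfl⟩, hrepB1 U⟩, rfl⟩ with hT
      have h1 : ({y | ∃ γ : G, γ • L = L ∧ γ • (repA T • l) = y} : Set X) =
          {y | ∃ γ : G, γ • L = L ∧ γ • (repB U • l) = y} := by
        rw [← hrepA2 T]
      have h2 : ∃ γ : G, γ • L = L ∧ γ • (repA T • l) = repB U • l :=
        (keyΓ _ _).mp h1
      have h3 : ∃ σ ∈ MulAction.stabilizer G l, σ • ((repA T)⁻¹ • L) = (repB U)⁻¹ • L :=
        (cross_lemma L l (repA T) (repB U)).mp h2
      have h4 := (keyS ((repA T)⁻¹ • L) ((repB U)⁻¹ • L)).mpr h3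
      rw [h4, ← hrepB2 U]
end

section
/- Let G be a group acting on a set X, let L ⊆ X, let Γ = Stab_G(L) = {g ∈ G : g·L = L}, let l ∈ L, let G^l be the stabilizer of l, and let Ω_l := {g·L : g ∈ G, l ∈ g·L}. Then (G·l) ∩ L = Γ·l if and only if Ω_l = {g·L : g ∈ G^l}. -/
open Pointwise

/-- Let `G` be a group acting on a set `X`, let `L ⊆ X`, let
`Γ = Stab_G(L)`, let `l ∈ L`, let `G^l` be the stabilizer of `l`, and let
`Ω_l = {g·L : g ∈ G, l ∈ g·L}`.  Then `(G·l) ∩ L = Γ·l` if and only if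
`Ω_l = {g·L : g ∈ G^l}`. -/
theorem orbit_inter_eq_stab_orbit_iff {G X : Type*} [Group G] [MulAction G X]
    (L : Set X) (l : X) (hl : l ∈ L) :
    (MulAction.orbit G l ∩ L = {x | ∃ γ : G, γ • L = L ∧ γ • l = x}) ↔
      ({S : Set X | ∃ g : G, S = g • L ∧ l ∈ g • L} =
        {S : Set X | ∃ g ∈ MulAction.stabilizer G l, S = g • L}) := by
  constructor
  · intro h
    ext S
    simp only [Set.mem_setOf_eq]
    constructor
    · rintro ⟨g, rfl, hgl⟩
      have h1 : g⁻¹ • l ∈ MulAction.orbit G l ∩ L := by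
        refine ⟨⟨g⁻¹, rfl⟩, ?_⟩
        rwa [← Set.mem_smul_set_iff_inv_smul_mem]
      rw [h] at h1
      obtain ⟨γ, hγL, hγl⟩ := h1
      refine ⟨g * γ, ?_, ?_⟩
      · rw [MulAction.mem_stabilizer_iff, mul_smul, hγl, smul_inv_smul]
      · rw [mul_smul, hγL]
    · rintro ⟨g, hg, rfl⟩
      refine ⟨g, rfl, ?_⟩
      rw [MulAction.mem_stabilizer_iff] at hg
      rw [← hg]
      exact Set.smul_mem_smul_set hl
  · intro h
    ext x
    simp only [Set.mem_setOf_eq, Set.mem_inter_iff]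
    constructor
    · rintro ⟨⟨g, rfl⟩, hxL⟩
      have h1 : g⁻¹ • L ∈ {S : Set X | ∃ g : G, S = g • L ∧ l ∈ g • L} := by
        exact ⟨g⁻¹, rfl, by rwa [Set.mem_smul_set_iff_inv_smul_mem, inv_inv]⟩
      rw [h] at h1
      obtain ⟨k, hk, hkL⟩ := h1
      refine ⟨g * k, ?_, ?_⟩
      · rw [mul_smul, ← hkL, smul_inv_smul]
      · rw [mul_smul, MulAction.mem_stabilizer_iff.mp hk]
    · rintro ⟨γ, hγL, rfl⟩
      refine ⟨⟨γ, rfl⟩, ?_⟩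
      rw [← hγL]
      exact Set.smul_mem_smul_set hl
end

section
/- Let E be a finite-dimensional affine space over a field, let 𝓗 be a family of affine hyperplanes of E, and let W be a group of affine automorphisms of E mapping each member of 𝓗 to a member of 𝓗. Let L be an affine subspace of E such that L equals the intersection of all H ∈ 𝓗 containing L, and let l ∈ L be a point such that every H ∈ 𝓗 containing l contains L. Then for every w ∈ W with w·l ∈ L one has w·L = L; consequently (W·l) ∩ L = Stab_W(L)·l. -/
/-- Let `E` be a finite-dimensional affine space over a field, let `𝓗` be a
family of affine hyperplanes of `E`, and let `W` be a group of affine automorphisms of `E`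
mapping each member of `𝓗` to a member of `𝓗`.  Let `L` be an affine subspace of `E` such that
`L` equals the intersection of all `H ∈ 𝓗` containing `L`, and let `l ∈ L` be a point such that
every `H ∈ 𝓗` containing `l` contains `L`.  Then for every `w ∈ W` with `w·l ∈ L` one has
`w·L = L`; consequently `(W·l) ∩ L = Stab_W(L)·l`. -/
theorem generic_point_orbit {k V E : Type*} [Field k] [AddCommGroup V] [Module k V]
    [FiniteDimensional k V] [AddTorsor V E]
    (𝓗 : Set (AffineSubspace k E))
    (h𝓗 : ∀ H ∈ 𝓗, (H : Set E).Nonempty ∧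
      Module.finrank k H.direction + 1 = Module.finrank k V)
    (W : Subgroup (E ≃ᵃ[k] E))
    (hW𝓗 : ∀ w ∈ W, ∀ H ∈ 𝓗, H.map w.toAffineMap ∈ 𝓗)
    (L : AffineSubspace k E)
    (hLflat : L = sInf {H | H ∈ 𝓗 ∧ L ≤ H})
    (l : E) (hl : l ∈ L)
    (hgen : ∀ H ∈ 𝓗, l ∈ H → L ≤ H) :
    (∀ w ∈ W, w l ∈ L → L.map w.toAffineMap = L) ∧
    ({x | ∃ w ∈ W, w l = x} ∩ (L : Set E) =
      {x | ∃ w ∈ W, L.map w.toAffineMap = L ∧ w l = x}) := by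
  have main : ∀ w ∈ W, w l ∈ L → L.map w.toAffineMap = L := by
    intro w hw hwl
    -- first: w·L ≤ L
    have hle : L.map w.toAffineMap ≤ L := by
      conv_rhs => rw [hLflat]
      refine le_sInf ?_
      rintro H ⟨hH, hLH⟩
      -- consider H' = w⁻¹ · H ∈ 𝓗; it contains l, hence L ≤ H'
      have hH' : H.map (w⁻¹ : E ≃ᵃ[k] E).toAffineMap ∈ 𝓗 :=
        hW𝓗 _ (inv_mem hw) H hH
      have hlH' : l ∈ H.map (w⁻¹ : E ≃ᵃ[k] E).toAffineMap := by
        refine ⟨w l, hLH hwl, ?_⟩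
        exact w.symm_apply_apply l
      have hLH' : L ≤ H.map (w⁻¹ : E ≃ᵃ[k] E).toAffineMap := hgen _ hH' hlH'
      rintro x ⟨y, hy, rfl⟩
      obtain ⟨z, hz, hzy⟩ := hLH' hy
      have hzy' : w.symm z = y := hzy
      have : w.toAffineMap y = z := by
        rw [show (w.toAffineMap y : E) = w y from rfl, ← hzy', w.apply_symm_apply]
      rwa [this]
    -- dimension argument
    have hne : ((L.map w.toAffineMap : AffineSubspace k E) : Set E).Nonempty :=
      ⟨w l, ⟨l, hl, rfl⟩⟩
    have hdir : (L.map w.toAffineMap).direction = L.direction := by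
      apply Submodule.eq_of_le_of_finrank_le
        (AffineSubspace.direction_le hle)
      rw [AffineSubspace.map_direction, AffineEquiv.linear_toAffineMap]
      exact le_of_eq (LinearEquiv.finrank_map_eq w.linear L.direction).symm
    exact AffineSubspace.ext_of_direction_eq hdir ⟨w l, ⟨l, hl, rfl⟩, hwl⟩
  refine ⟨main, ?_⟩
  ext x
  constructor
  · rintro ⟨⟨w, hw, rfl⟩, hxL⟩
    exact ⟨w, hw, main w hw hxL, rfl⟩
  · rintro ⟨w, hw, hmap, rfl⟩
    exact ⟨⟨w, hw, rfl⟩, hmap ▸ ⟨l, hl, rfl⟩⟩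
end

section
/- Let W and K be groups of bijections of a set E with kWk^{-1} = W for all k ∈ K, let D ⊆ E satisfy D ∩ (W·p) = {p} for every p ∈ D and k(D) = D for all k ∈ K. Then for every subset S ⊆ D: whenever k ∈ K and w ∈ W are such that k∘w fixes S pointwise, both k and w fix S pointwise; hence the pointwise stabilizer of S in the group KW = {kw : k ∈ K, w ∈ W} equals K^S · W^S, where K^S and W^S denote the pointwise stabilizers of S in K and W. Moreover, if E is an affine space on which all elements of K and W act as affine bijections and L is the affine span of a subset S ⊆ D, then the pointwise stabilizer of L in KW equals K^L · W^L. -/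
/-- An affine equivalence fixing a set pointwise fixes its affine span pointwise. -/
theorem fix_affineSpan_of_fix {k V E : Type*} [Field k] [AddCommGroup V] [Module k V]
    [AddTorsor V E] (f : E ≃ᵃ[k] E) (S : Set E) (hf : ∀ s ∈ S, f s = s) :
    ∀ x ∈ affineSpan k S, f x = x := by
  intro x hx
  refine affineSpan_induction (p := fun y => f y = y) hx hf ?_
  intro c u v w hu hv hw
  have : f (c • (u -ᵥ v) +ᵥ w) = f.linear (c • (u -ᵥ v)) +ᵥ f w := f.toAffineMap.map_vadd w _
  rw [this, f.linear.map_smul, hw]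
  have hv' : f.linear (u -ᵥ v) = f u -ᵥ f v := f.toAffineMap.linearMap_vsub u v
  rw [hv', hu, hv]

/-- Let `W` and `K` be groups of bijections of a set `E` with `K`
normalizing `W`, and let `D ⊆ E` satisfy `D ∩ (W·p) = {p}` for every `p ∈ D` and `k(D) = D`
for all `k ∈ K`.  Then for every subset `S ⊆ D`: whenever `k ∈ K` and `w ∈ W` are such that
`k∘w` fixes `S` pointwise, both `k` and `w` fix `S` pointwise; hence the pointwise stabilizer
of `S` in `KW` equals `K^S · W^S`.  Moreover, if `E` is an affine space on which all elements
of `K` and `W` act as affine bijections and `L` is the affine span of `S ⊆ D`, then the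
pointwise stabilizer of `L` in `KW` equals `K^L · W^L`. -/
theorem pointwise_stabilizer_semidirect {k V E : Type*} [Field k] [AddCommGroup V] [Module k V]
    [FiniteDimensional k V] [AddTorsor V E]
    (W K : Subgroup (Equiv.Perm E))
    (hnorm : ∀ κ ∈ K, ∀ w ∈ W, κ * w * κ⁻¹ ∈ W)
    (D : Set E)
    (hD : ∀ p ∈ D, D ∩ {x | ∃ w ∈ W, w p = x} = {p})
    (hKD : ∀ κ ∈ K, ⇑κ '' D = D)
    (haff : ∀ g : Equiv.Perm E, g ∈ W ∨ g ∈ K → ∃ f : E ≃ᵃ[k] E, ⇑g = ⇑f) :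
    -- if `k ∘ w` fixes `S ⊆ D` pointwise then so do `k` and `w`
    (∀ S ⊆ D, ∀ κ ∈ K, ∀ w ∈ W, (∀ s ∈ S, κ (w s) = s) →
      (∀ s ∈ S, κ s = s) ∧ (∀ s ∈ S, w s = s)) ∧
    -- the pointwise stabilizer of `S` in `KW` is `K^S · W^S`
    (∀ S ⊆ D, ∀ g : Equiv.Perm E,
      ((∃ κ ∈ K, ∃ w ∈ W, g = κ * w) ∧ ∀ s ∈ S, g s = s) ↔
        (∃ κ ∈ K, ∃ w ∈ W, (∀ s ∈ S, κ s = s) ∧ (∀ s ∈ S, w s = s) ∧ g = κ * w)) ∧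
    -- the pointwise stabilizer of `L = affineSpan S` in `KW` is `K^L · W^L`
    (∀ S ⊆ D, ∀ g : Equiv.Perm E,
      ((∃ κ ∈ K, ∃ w ∈ W, g = κ * w) ∧ ∀ x ∈ affineSpan k S, g x = x) ↔
        (∃ κ ∈ K, ∃ w ∈ W, (∀ x ∈ affineSpan k S, κ x = x) ∧
          (∀ x ∈ affineSpan k S, w x = x) ∧ g = κ * w)) := by
  -- main lemma
  have main : ∀ S ⊆ D, ∀ κ ∈ K, ∀ w ∈ W, (∀ s ∈ S, κ (w s) = s) →
      (∀ s ∈ S, κ s = s) ∧ (∀ s ∈ S, w s = s) := by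
    intro S hS κ hκ w hw hfix
    have hw' : ∀ s ∈ S, w s = s := by
      intro s hs
      have hsD : s ∈ D := hS hs
      have hκinv : (κ⁻¹ : Equiv.Perm E) '' D = D := hKD κ⁻¹ (inv_mem hκ)
      have hws : w s = κ⁻¹ s := by
        have := hfix s hs
        have : (κ⁻¹ : Equiv.Perm E) (κ (w s)) = κ⁻¹ s := by rw [this]
        simpa using this
      have hwsD : w s ∈ D := by
        rw [hws, ← hκinv]; exact ⟨s, hsD, rfl⟩
      have : w s ∈ D ∩ {x | ∃ w' ∈ W, w' s = x} := ⟨hwsD, w, hw, rfl⟩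
      rw [hD s hsD] at this
      exact this
    refine ⟨?_, hw'⟩
    intro s hs
    have := hfix s hs
    rwa [hw' s hs] at this
  refine ⟨main, ?_, ?_⟩
  · intro S hS g
    constructor
    · rintro ⟨⟨κ, hκ, w, hw, rfl⟩, hfix⟩
      have hfix' : ∀ s ∈ S, κ (w s) = s := fun s hs => hfix s hs
      obtain ⟨h1, h2⟩ := main S hS κ hκ w hw hfix'
      exact ⟨κ, hκ, w, hw, h1, h2, rfl⟩
    · rintro ⟨κ, hκ, w, hw, h1, h2, rfl⟩
      refine ⟨⟨κ, hκ, w, hw, rfl⟩, fun s hs => ?_⟩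
      show κ (w s) = s
      rw [h2 s hs, h1 s hs]
  · intro S hS g
    constructor
    · rintro ⟨⟨κ, hκ, w, hw, rfl⟩, hfix⟩
      have hSfix : ∀ s ∈ S, κ (w s) = s := fun s hs =>
        hfix s (subset_affineSpan k S hs)
      obtain ⟨h1, h2⟩ := main S hS κ hκ w hw hSfix
      obtain ⟨fκ, hfκ⟩ := haff κ (Or.inr hκ)
      obtain ⟨fw, hfw⟩ := haff w (Or.inl hw)
      have h1' : ∀ x ∈ affineSpan k S, κ x = x := by
        intro x hx
        rw [hfκ]
        exact fix_affineSpan_of_fix fκ S (fun s hs => by rw [← hfκ]; exact h1 s hs) x hx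
      have h2' : ∀ x ∈ affineSpan k S, w x = x := by
        intro x hx
        rw [hfw]
        exact fix_affineSpan_of_fix fw S (fun s hs => by rw [← hfw]; exact h2 s hs) x hx
      exact ⟨κ, hκ, w, hw, h1', h2', rfl⟩
    · rintro ⟨κ, hκ, w, hw, h1, h2, rfl⟩
      refine ⟨⟨κ, hκ, w, hw, rfl⟩, fun x hx => ?_⟩
      show κ (w x) = x
      rw [h2 x hx, h1 x hx]
end

section
/- Let V be a finite-dimensional real inner product space, let G be a finite subgroup of the orthogonal group O(V) with no nonzero fixed vectors (V^G = {0}), and let L be a one-dimensional linear subspace of V with setwise stabilizer Γ = {g ∈ G : g(L) = L}. Let V_ℂ and L_ℂ be the complexifications, with the G-action extended ℂ-linearly. Then the restriction homomorphism ℂ[V_ℂ]^G → ℂ[L_ℂ]^Γ between invariant algebras of polynomial functions is surjective if and only if Γ acts nontrivially on L (in which case every nontrivial element of Γ|_L acts as −1). -/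
/-!
Write `L = ℝ x₀`, fix a real linear form `φ` with `φ x₀ = 1` and let `ℓ` be its complexification.
Along `L_ℂ` every polynomial function is a polynomial in the coordinate `c` of `c • (1 ⊗ x₀)`,
and since `G` acts by isometries, `Γ` acts on `L` by `±1`.

If some `γ ∈ Γ` acts by `-1`, the `Γ`-invariants on `L_ℂ` are the even polynomials in `c`, i.e.
polynomials in `c²`, and `c²` is the restriction of the `G`-invariant `∑_g ℓ(g x)²` divided by
its value at `1 ⊗ x₀`, a sum of real squares one of which is `1`.

If `Γ` acts trivially, `c` itself is `Γ`-invariant. A `G`-invariant polynomial lift of it would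
have a `G`-invariant differential at `0`; but averaging shows that every `G`-invariant linear form
vanishes because `V^G = 0`, whereas the differential of the lift in the direction `1 ⊗ x₀` is `1`.
-/

open scoped TensorProduct

/-- The algebra of polynomial functions on a complex vector space `V`: the subalgebra of
`V → ℂ` generated by the linear functionals. -/
noncomputable def polyFuns (V : Type*) [AddCommGroup V] [Module ℂ V] : Subalgebra ℂ (V → ℂ) :=
  Algebra.adjoin ℂ {f : V → ℂ | ∃ φ : V →ₗ[ℂ] ℂ, ⇑φ = f}

/-- Restriction of functions to a subset, as an algebra homomorphism. -/
def resAlg {V : Type*} (S : Set V) : (V → ℂ) →ₐ[ℂ] (S → ℂ) where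
  toFun f x := f x
  map_one' := rfl
  map_mul' _ _ := rfl
  map_zero' := rfl
  map_add' _ _ := rfl
  commutes' _ := rfl

/-- The subalgebra of functions on the subset `S` that are invariant under a family `T` of
transformations of the ambient space (each of which maps `S` into itself). -/
def invFns {X : Type*} (T : Set (X → X)) (S : Set X) : Subalgebra ℂ (S → ℂ) where
  carrier := {f | ∀ t ∈ T, ∀ x y : S, t x = (y : X) → f y = f x}
  mul_mem' := by
    intro f₁ f₂ h₁ h₂ t ht x y hxy
    simp only [Pi.mul_apply, h₁ t ht x y hxy, h₂ t ht x y hxy]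
  add_mem' := by
    intro f₁ f₂ h₁ h₂ t ht x y hxy
    simp only [Pi.add_apply, h₁ t ht x y hxy, h₂ t ht x y hxy]
  one_mem' := by intro t ht x y hxy; rfl
  zero_mem' := by intro t ht x y hxy; rfl
  algebraMap_mem' := by intro r t ht x y hxy; rfl

open Polynomial

theorem Polynomial.exists_expand_two_eq_of_eval_neg {K : Type*} [Field K] [CharZero K]
    {p : K[X]} (hp : ∀ c, p.eval (-c) = p.eval c) : ∃ r : K[X], expand K 2 r = p := by
  have hcomp : p.comp (C (-1) * X) = p := Polynomial.funext fun c => by simp [hp]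
  refine ⟨contract 2 p, ext fun n => ?_⟩
  rw [coeff_expand two_pos, coeff_contract two_ne_zero]
  split_ifs with h
  · rw [Nat.div_mul_cancel h]
  · have hn := congr(coeff $hcomp n)
    rw [comp_C_mul_X_coeff, (Nat.odd_iff.2 (Nat.two_dvd_ne_zero.1 h)).neg_one_pow] at hn
    linear_combination hn / 2

@[simp]
theorem resAlg_apply {V : Type*} (S : Set V) (F : V → ℂ) (x : S) : resAlg S F x = F x :=
  rfl

section PolyFuns

variable {W : Type*} [AddCommGroup W] [Module ℂ W]

theorem polyFuns.linearMap_mem (φ : W →ₗ[ℂ] ℂ) : ⇑φ ∈ polyFuns W :=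
  Algebra.subset_adjoin ⟨φ, rfl⟩

theorem polyFuns.eval_comp_mem {F : W → ℂ} (hF : F ∈ polyFuns W) (r : ℂ[X]) :
    (fun x => r.eval (F x)) ∈ polyFuns W := by
  have h : (fun x => r.eval (F x)) = aeval F r := by
    funext x
    rw [aeval_fn_apply, coe_aeval_eq_eval]
  rw [h]
  exact Algebra.adjoin_le (Set.singleton_subset_iff.2 hF) (aeval_mem_adjoin_singleton ℂ F)

theorem polyFuns.exists_eval_smul {F : W → ℂ} (hF : F ∈ polyFuns W) (e : W) :
    ∃ p : ℂ[X], ∀ c : ℂ, F (c • e) = p.eval c := by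
  induction hF using Algebra.adjoin_induction with
  | mem F hF =>
    obtain ⟨φ, rfl⟩ := hF
    exact ⟨C (φ e) * X, fun c => by simp [mul_comm c]⟩
  | algebraMap a => exact ⟨C a, fun c => (eval_C).symm⟩
  | add F₁ F₂ _ _ h₁ h₂ =>
    obtain ⟨⟨p₁, hp₁⟩, ⟨p₂, hp₂⟩⟩ := And.intro h₁ h₂
    exact ⟨p₁ + p₂, fun c => by simp [hp₁, hp₂]⟩
  | mul F₁ F₂ _ _ h₁ h₂ =>
    obtain ⟨⟨p₁, hp₁⟩, ⟨p₂, hp₂⟩⟩ := And.intro h₁ h₂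
    exact ⟨p₁ * p₂, fun c => by simp [hp₁, hp₂]⟩

theorem polyFuns.exists_hasDerivAt_smul {F : W → ℂ} (hF : F ∈ polyFuns W) :
    ∃ ψ : W →ₗ[ℂ] ℂ, ∀ v, HasDerivAt (fun s : ℂ => F (s • v)) (ψ v) 0 := by
  induction hF using Algebra.adjoin_induction with
  | mem F hF =>
    obtain ⟨φ, rfl⟩ := hF
    exact ⟨φ, fun v => by simpa using hasDerivAt_mul_const (φ v)⟩
  | algebraMap a => exact ⟨0, fun v => hasDerivAt_const 0 a⟩
  | add F₁ F₂ _ _ h₁ h₂ =>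
    obtain ⟨⟨ψ₁, h₁⟩, ⟨ψ₂, h₂⟩⟩ := And.intro h₁ h₂
    exact ⟨ψ₁ + ψ₂, fun v => (h₁ v).add (h₂ v)⟩
  | mul F₁ F₂ _ _ h₁ h₂ =>
    obtain ⟨⟨ψ₁, h₁⟩, ⟨ψ₂, h₂⟩⟩ := And.intro h₁ h₂
    refine ⟨F₂ 0 • ψ₁ + F₁ 0 • ψ₂, fun v => ?_⟩
    simpa [mul_comm] using (h₁ v).fun_mul (h₂ v)

end PolyFuns

section Averaging

variable {G W : Type*} [Group G] [Fintype G] [AddCommGroup W] [Module ℂ W]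
  (ρ : Representation ℂ G W)

def averagedSquare (ℓ : W →ₗ[ℂ] ℂ) (x : W) : ℂ :=
  ∑ g, ℓ (ρ g x) ^ 2

theorem averagedSquare_mem_polyFuns (ℓ : W →ₗ[ℂ] ℂ) : averagedSquare ρ ℓ ∈ polyFuns W := by
  have h : averagedSquare ρ ℓ = ∑ g, (⇑(ℓ ∘ₗ ρ g)) ^ 2 := by
    funext x
    simp [averagedSquare]
  rw [h]
  exact Subalgebra.sum_mem _ fun g _ => pow_mem (polyFuns.linearMap_mem _) 2

theorem averagedSquare_apply_rep (ℓ : W →ₗ[ℂ] ℂ) (g : G) (x : W) :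
    averagedSquare ρ ℓ (ρ g x) = averagedSquare ρ ℓ x := by
  simp only [averagedSquare, ← Module.End.mul_apply, ← map_mul]
  exact Fintype.sum_equiv (Equiv.mulRight g) _ _ fun _ => rfl

theorem averagedSquare_smul (ℓ : W →ₗ[ℂ] ℂ) (c : ℂ) (x : W) :
    averagedSquare ρ ℓ (c • x) = c ^ 2 * averagedSquare ρ ℓ x := by
  simp [averagedSquare, Finset.mul_sum, mul_pow]

/-- An even polynomial in the coordinate along `e` is a polynomial in its square, and the
square lifts to the normalised `averagedSquare`. -/
theorem exists_invariant_eval_smul_eq_of_even {ℓ : W →ₗ[ℂ] ℂ} {e : W}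
    (he : averagedSquare ρ ℓ e ≠ 0) {F₀ : W → ℂ} (hF₀ : F₀ ∈ polyFuns W)
    (heven : ∀ c : ℂ, F₀ ((-c) • e) = F₀ (c • e)) :
    ∃ F ∈ polyFuns W, (∀ g x, F (ρ g x) = F x) ∧ ∀ c : ℂ, F (c • e) = F₀ (c • e) := by
  obtain ⟨p, hp⟩ := polyFuns.exists_eval_smul hF₀ e
  obtain ⟨r, rfl⟩ := exists_expand_two_eq_of_eval_neg fun c => by rw [← hp, ← hp, heven]
  set Q := (averagedSquare ρ ℓ e)⁻¹ • averagedSquare ρ ℓ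
  refine ⟨fun x => r.eval (Q x),
    polyFuns.eval_comp_mem (Subalgebra.smul_mem _ (averagedSquare_mem_polyFuns ρ ℓ) _) r,
    fun g x => by simp [Q, averagedSquare_apply_rep], fun c => ?_⟩
  simp [Q, hp, averagedSquare_smul, expand_eval, mul_left_comm _ (c ^ 2), he]

end Averaging

theorem Representation.linearMap_eq_zero_of_invariants_eq_bot {K G V N : Type*} [Field K]
    [CharZero K] [Group G] [Fintype G] [AddCommGroup V] [Module K V] [AddCommGroup N]
    [Module K N] (σ : Representation K G V) (hσ : σ.invariants = ⊥) (f : V →ₗ[K] N)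
    (hf : ∀ g, f ∘ₗ σ g = f) : f = 0 := by
  ext x
  have hsum : ∑ g, σ g x = 0 := by
    rw [← Submodule.mem_bot K, ← hσ]
    intro h
    simp only [map_sum, ← Module.End.mul_apply, ← map_mul]
    exact Fintype.sum_equiv (Equiv.mulLeft h) _ _ fun _ => rfl
  have hfx (g : G) : f (σ g x) = f x := LinearMap.congr_fun (hf g) x
  have hcard : (Fintype.card G : K) • f x = 0 := by
    calc (Fintype.card G : K) • f x = ∑ g, f (σ g x) := by
          rw [Finset.sum_congr rfl fun g _ => hfx g, Finset.sum_const, Finset.card_univ,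
            Nat.cast_smul_eq_nsmul]
      _ = 0 := by rw [← map_sum, hsum, map_zero]
  simpa using hcard

def Representation.baseChange {R G V : Type*} [CommSemiring R] [Monoid G] [AddCommMonoid V]
    [Module R V] (σ : Representation R G V) (A : Type*) [CommSemiring A] [Algebra R A] :
    Representation A G (A ⊗[R] V) :=
  (Module.End.baseChangeHom R A V).toMonoidHom.comp σ

@[simp]
theorem Representation.baseChange_apply {R G V : Type*} [CommSemiring R] [Monoid G]
    [AddCommMonoid V] [Module R V] (σ : Representation R G V) (A : Type*) [CommSemiring A]
    [Algebra R A] (g : G) : σ.baseChange A g = (σ g).baseChange A :=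
  rfl

section Complexification

variable {G V : Type*} [Group G] [Fintype G] [AddCommGroup V] [Module ℝ V]
  (σ : Representation ℝ G V)

theorem Representation.hasDerivAt_smul_zero_of_invariant (hσ : σ.invariants = ⊥)
    {F : ℂ ⊗[ℝ] V → ℂ} (hF : F ∈ polyFuns (ℂ ⊗[ℝ] V))
    (hinv : ∀ g x, F (σ.baseChange ℂ g x) = F x) (v : ℂ ⊗[ℝ] V) :
    HasDerivAt (fun s : ℂ => F (s • v)) 0 0 := by
  obtain ⟨ψ, hψ⟩ := polyFuns.exists_hasDerivAt_smul hF
  have hψinv (g : G) (v : ℂ ⊗[ℝ] V) : ψ (σ.baseChange ℂ g v) = ψ v := by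
    have h := hψ (σ.baseChange ℂ g v)
    simp only [← map_smul, hinv] at h
    exact h.unique (hψ v)
  have hreal : ψ.restrictScalars ℝ ∘ₗ TensorProduct.mk ℝ ℂ V 1 = 0 :=
    σ.linearMap_eq_zero_of_invariants_eq_bot hσ _ fun g => LinearMap.ext fun x => by
      simpa using hψinv g (1 ⊗ₜ x)
  have hψ0 : ψ = 0 := TensorProduct.AlgebraTensorModule.ext fun a x => by
    rw [← mul_one a, ← smul_eq_mul, ← TensorProduct.smul_tmul', map_smul]
    simpa using congr(a • $(LinearMap.congr_fun hreal x))
  simpa [hψ0] using hψ v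

theorem Representation.eval_smul_ne_id_of_invariant (hσ : σ.invariants = ⊥)
    {F : ℂ ⊗[ℝ] V → ℂ} (hF : F ∈ polyFuns (ℂ ⊗[ℝ] V))
    (hinv : ∀ g x, F (σ.baseChange ℂ g x) = F x) (v : ℂ ⊗[ℝ] V) :
    (fun c : ℂ => F (c • v)) ≠ id := fun hline => by
  have h := σ.hasDerivAt_smul_zero_of_invariant hσ hF hinv v
  rw [hline] at h
  exact one_ne_zero ((hasDerivAt_id 0).unique h)

theorem Representation.averagedSquare_baseChange_ne_zero {φ : Module.Dual ℝ V} {x₀ : V}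
    (hφ : φ x₀ = 1) :
    averagedSquare (σ.baseChange ℂ) (φ.baseChange ℂ) ((1 : ℂ) ⊗ₜ x₀) ≠ 0 := by
  have h : averagedSquare (σ.baseChange ℂ) (φ.baseChange ℂ) ((1 : ℂ) ⊗ₜ x₀)
      = ((∑ g, φ (σ g x₀) ^ 2 : ℝ) : ℂ) := by
    simp [averagedSquare]
  rw [h, Complex.ofReal_ne_zero]
  refine (lt_of_lt_of_le one_pos ?_).ne'
  calc (1 : ℝ) = φ (σ 1 x₀) ^ 2 := by simp [hφ]
    _ ≤ ∑ g, φ (σ g x₀) ^ 2 :=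
      Finset.single_le_sum (f := fun g => φ (σ g x₀) ^ 2) (fun g _ => sq_nonneg _)
        (Finset.mem_univ 1)

end Complexification

theorem Submodule.exists_eq_span_singleton_of_finrank_eq_one {K V : Type*} [Field K]
    [AddCommGroup V] [Module K V] {L : Submodule K V} (hL : Module.finrank K L = 1) :
    ∃ x₀ : V, x₀ ≠ 0 ∧ L = K ∙ x₀ := by
  obtain ⟨⟨x₀, hx₀L⟩, hx₀, hspan⟩ := finrank_eq_one_iff'.1 hL
  refine ⟨x₀, Subtype.coe_ne_coe.2 hx₀, le_antisymm (fun x hx => ?_)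
    ((Submodule.span_singleton_le_iff_mem _ _).2 hx₀L)⟩
  obtain ⟨c, hc⟩ := hspan ⟨x, hx⟩
  exact Submodule.mem_span_singleton.2 ⟨c, congrArg Subtype.val hc⟩

theorem Submodule.mem_baseChange_span_singleton {R A M : Type*} [CommSemiring R]
    [CommSemiring A] [Algebra R A] [AddCommMonoid M] [Module R M] (v : M) (x : A ⊗[R] M) :
    x ∈ (R ∙ v).baseChange A ↔ ∃ a : A, a • ((1 : A) ⊗ₜ v) = x := by
  simp [Submodule.baseChange_span, Submodule.mem_span_singleton]

theorem LinearIsometry.eq_self_or_eq_neg_of_finrank_eq_one {E : Type*} [NormedAddCommGroup E]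
    [NormedSpace ℝ E] (g : E →ₗᵢ[ℝ] E) {L : Submodule ℝ E} (hL : Module.finrank ℝ L = 1)
    (hgL : ∀ x ∈ L, g x ∈ L) : (∀ x ∈ L, g x = x) ∨ ∀ x ∈ L, g x = -x := by
  obtain ⟨v, hv, hspan⟩ := finrank_eq_one_iff'.1 hL
  obtain ⟨c, hc⟩ := hspan ⟨g v, hgL v v.2⟩
  have hgv : g v = c • (v : E) := (congrArg Subtype.val hc).symm
  have hgx : ∀ x ∈ L, g x = c • x := fun x hx => by
    obtain ⟨a, ha⟩ := hspan ⟨x, hx⟩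
    obtain rfl : a • (v : E) = x := congrArg Subtype.val ha
    rw [map_smul, hgv, smul_comm]
  have hc1 : |c| = 1 := by
    have h := g.norm_map v
    rw [hgv, norm_smul, Real.norm_eq_abs] at h
    exact (mul_eq_right₀ (by simpa using hv)).1 h
  rcases abs_eq_abs.1 (hc1.trans abs_one.symm) with rfl | rfl
  · exact .inl fun x hx => by simp [hgx x hx]
  · exact .inr fun x hx => by simp [hgx x hx]

def Subgroup.linearIsometryRep {E : Type*} [NormedAddCommGroup E] [NormedSpace ℝ E]
    (G : Subgroup (E ≃ₗᵢ[ℝ] E)) : Representation ℝ G E where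
  toFun g := (g : E ≃ₗᵢ[ℝ] E).toLinearEquiv.toLinearMap
  map_one' := rfl
  map_mul' _ _ := rfl

theorem dim_one_restriction_surjective_iff_general
    {V : Type*} [NormedAddCommGroup V] [InnerProductSpace ℝ V]
    (G : Subgroup (V ≃ₗᵢ[ℝ] V)) (hGfin : (G : Set (V ≃ₗᵢ[ℝ] V)).Finite)
    (hfix : ∀ v : V, (∀ g ∈ G, g v = v) → v = 0)
    (L : Submodule ℝ V) (hLdim : Module.finrank ℝ L = 1) :
    (let Γ : Set (V ≃ₗᵢ[ℝ] V) :=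
       {g | g ∈ G ∧ L.map (g : V ≃ₗᵢ[ℝ] V).toLinearEquiv.toLinearMap = L}
     let Vc := ℂ ⊗[ℝ] V
     let Lc : Set Vc := ((L.baseChange ℂ : Submodule ℂ Vc) : Set Vc)
     -- `ℂ[L_ℂ]^Γ`, the `Γ`-invariant polynomial functions on `L_ℂ`
     let CLΓ : Subalgebra ℂ (Lc → ℂ) :=
       (polyFuns Vc).map (resAlg Lc) ⊓
         invFns {f : Vc → Vc | ∃ g ∈ Γ,
           f = ⇑(LinearMap.baseChange ℂ (g : V ≃ₗᵢ[ℝ] V).toLinearEquiv.toLinearMap)} Lc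
     -- the restriction map `ℂ[V_ℂ]^G → ℂ[L_ℂ]^Γ` is surjective iff `Γ` acts nontrivially on `L`
     ((∀ f ∈ CLΓ, ∃ F ∈ polyFuns Vc,
        (∀ g ∈ G, ∀ x : Vc,
           F (LinearMap.baseChange ℂ (g : V ≃ₗᵢ[ℝ] V).toLinearEquiv.toLinearMap x) = F x) ∧
        resAlg Lc F = f) ↔
      (∃ g ∈ Γ, ∃ x ∈ L, g x ≠ x)) ∧
     -- in which case every element of `Γ` acts on `L` as the identity or as `-1`
     ((∃ g ∈ Γ, ∃ x ∈ L, g x ≠ x) →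
        ∀ g ∈ Γ, (∀ x ∈ L, g x = x) ∨ (∀ x ∈ L, g x = -x))) := by
  intro Γ Vc Lc CLΓ
  have : Fintype G := hGfin.fintype
  set σ := G.linearIsometryRep
  have hσ : σ.invariants = ⊥ :=
    (Submodule.eq_bot_iff _).2 fun v hv => hfix v fun g hg => hv ⟨g, hg⟩
  obtain ⟨x₀, hx₀, hL⟩ := L.exists_eq_span_singleton_of_finrank_eq_one hLdim
  have hx₀L : x₀ ∈ L := hL ▸ Submodule.mem_span_singleton_self x₀
  set e : Vc := (1 : ℂ) ⊗ₜ x₀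
  have hLc (x : Vc) : x ∈ Lc ↔ ∃ c : ℂ, c • e = x := by
    simp only [Lc, SetLike.mem_coe, hL]
    exact Submodule.mem_baseChange_span_singleton x₀ x
  obtain ⟨φ, hφ⟩ := Module.Projective.exists_dual_eq_one ℝ hx₀
  have hdich : ∀ g ∈ Γ, (∀ x ∈ L, g x = x) ∨ ∀ x ∈ L, g x = -x := fun g hg =>
    g.toLinearIsometry.eq_self_or_eq_neg_of_finrank_eq_one hLdim fun x hx =>
      hg.2 ▸ Submodule.mem_map_of_mem hx
  refine ⟨⟨fun hsurj => ?_, fun hex => ?_⟩, fun _ => hdich⟩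
  · by_contra! htriv
    have hfixLc : ∀ g ∈ Γ, ∀ x ∈ Lc, g.toLinearEquiv.toLinearMap.baseChange ℂ x = x := by
      rintro g hg x hx
      obtain ⟨c, rfl⟩ := (hLc x).1 hx
      simp [e, htriv g hg x₀ hx₀L]
    obtain ⟨F, hF, hFinv, hFres⟩ := hsurj (resAlg Lc (φ.baseChange ℂ))
      ⟨⟨_, polyFuns.linearMap_mem _, rfl⟩, by
        rintro t ⟨g, hg, rfl⟩ x y hxy
        rw [resAlg_apply, resAlg_apply, ← hxy, hfixLc g hg x x.2]⟩
    refine σ.eval_smul_ne_id_of_invariant hσ hF (fun g => hFinv g g.2) e (funext fun c => ?_)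
    simpa [e, hφ] using congrFun hFres ⟨c • e, (hLc _).2 ⟨c, rfl⟩⟩
  · obtain ⟨γ, hγ, x, hxL, hγx⟩ := hex
    have hγL : γ x₀ = -x₀ := (hdich γ hγ).resolve_left (fun h => hγx (h x hxL)) x₀ hx₀L
    have hγneg (c : ℂ) : γ.toLinearEquiv.toLinearMap.baseChange ℂ (c • e) = (-c) • e := by
      simp [e, hγL, TensorProduct.tmul_neg]
    rintro f ⟨⟨F₀, hF₀, rfl⟩, hf⟩
    obtain ⟨F, hF, hFinv, hFline⟩ := exists_invariant_eval_smul_eq_of_even (σ.baseChange ℂ)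
      (σ.averagedSquare_baseChange_ne_zero hφ) hF₀ fun c =>
        hf _ ⟨γ, hγ, rfl⟩ ⟨c • e, (hLc _).2 ⟨c, rfl⟩⟩ ⟨(-c) • e, (hLc _).2 ⟨-c, rfl⟩⟩ (hγneg c)
    refine ⟨F, hF, fun g hg => hFinv ⟨g, hg⟩, funext fun ⟨x, hx⟩ => ?_⟩
    obtain ⟨c, rfl⟩ := (hLc x).1 hx
    exact hFline c

set_option synthInstance.maxHeartbeats 1000000 in
set_option maxHeartbeats 1000000 in
/-- Let `V` be a finite-dimensional real inner product space, `G` a finite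
subgroup of `O(V)` with `V^G = {0}`, and `L` a one-dimensional subspace with setwise
stabilizer `Γ = {g ∈ G : g(L) = L}`.  Then the restriction homomorphism
`ℂ[V_ℂ]^G → ℂ[L_ℂ]^Γ` between the invariant algebras of polynomial functions on the
complexifications is surjective if and only if `Γ` acts nontrivially on `L`. -/
theorem dim_one_restriction_surjective_iff
    {V : Type*} [NormedAddCommGroup V] [InnerProductSpace ℝ V] [FiniteDimensional ℝ V]
    (G : Subgroup (V ≃ₗᵢ[ℝ] V)) (hGfin : (G : Set (V ≃ₗᵢ[ℝ] V)).Finite)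
    (hfix : ∀ v : V, (∀ g ∈ G, g v = v) → v = 0)
    (L : Submodule ℝ V) (hLdim : Module.finrank ℝ L = 1) :
    (let Γ : Set (V ≃ₗᵢ[ℝ] V) :=
       {g | g ∈ G ∧ L.map (g : V ≃ₗᵢ[ℝ] V).toLinearEquiv.toLinearMap = L}
     let Vc := ℂ ⊗[ℝ] V
     let Lc : Set Vc := ((L.baseChange ℂ : Submodule ℂ Vc) : Set Vc)
     -- `ℂ[L_ℂ]^Γ`, the `Γ`-invariant polynomial functions on `L_ℂ`
     let CLΓ : Subalgebra ℂ (Lc → ℂ) :=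
       (polyFuns Vc).map (resAlg Lc) ⊓
         invFns {f : Vc → Vc | ∃ g ∈ Γ,
           f = ⇑(LinearMap.baseChange ℂ (g : V ≃ₗᵢ[ℝ] V).toLinearEquiv.toLinearMap)} Lc
     -- the restriction map `ℂ[V_ℂ]^G → ℂ[L_ℂ]^Γ` is surjective iff `Γ` acts nontrivially on `L`
     ((∀ f ∈ CLΓ, ∃ F ∈ polyFuns Vc,
        (∀ g ∈ G, ∀ x : Vc,
           F (LinearMap.baseChange ℂ (g : V ≃ₗᵢ[ℝ] V).toLinearEquiv.toLinearMap x) = F x) ∧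
        resAlg Lc F = f) ↔
      (∃ g ∈ Γ, ∃ x ∈ L, g x ≠ x)) ∧
     -- in which case every element of `Γ` acts on `L` as the identity or as `-1`
     ((∃ g ∈ Γ, ∃ x ∈ L, g x ≠ x) →
        ∀ g ∈ Γ, (∀ x ∈ L, g x = x) ∨ (∀ x ∈ L, g x = -x))) :=
  dim_one_restriction_surjective_iff_general G hGfin hfix L hLdim
end

section
/- Let 𝓗 be an admissible affine hyperplane arrangement in E, let K be a subgroup of the isometry group of E stabilizing ⋀ and preserving 𝓗, set W_{𝓗,K} = K ⋉ W_𝓗, let L be a flat lying over ⋀, and let l ∈ L ∩ ⋀. Then {w·L : w ∈ W_{𝓗,K}, l ∈ w·L} = {σ·M : σ ∈ W_𝓗^l, M = w·L for some w ∈ W_{𝓗,K} such that M lies over ⋀ and l ∈ M}, where W_𝓗^l is the stabilizer of l in W_𝓗. -/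
open EuclideanGeometry Set Filter Topology

section Reflection

variable {V : Type*} [NormedAddCommGroup V] [InnerProductSpace ℝ V]
variable {E : Type*} [MetricSpace E] [NormedAddTorsor V E]

theorem EuclideanGeometry.dist_reflection_sq (s : AffineSubspace ℝ E) [Nonempty s]
    [s.direction.HasOrthogonalProjection] (y c : E) :
    dist y (reflection s c) ^ 2 = dist y c ^ 2 +
      4 * inner ℝ (y -ᵥ (orthogonalProjection s y : E)) (c -ᵥ (orthogonalProjection s c : E)) := by
  set a := y -ᵥ (orthogonalProjection s y : E)
  set b := c -ᵥ (orthogonalProjection s c : E)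
  set d := (orthogonalProjection s y : E) -ᵥ (orthogonalProjection s c : E)
  have hbd : inner ℝ b d = 0 :=
    Submodule.inner_left_of_mem_orthogonal
      (AffineSubspace.vsub_mem_direction (orthogonalProjection_mem y) (orthogonalProjection_mem c))
      (vsub_orthogonalProjection_mem_direction_orthogonal s c)
  have hyc : y -ᵥ c = a + d - b := by
    rw [sub_eq_add_neg, neg_vsub_eq_vsub_rev, vsub_add_vsub_cancel, vsub_add_vsub_cancel]
  have hyr : y -ᵥ reflection s c = a + d + b := by
    rw [reflection_apply', vsub_vadd_eq_vsub_sub, vsub_add_vsub_cancel, sub_eq_add_neg,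
      neg_vsub_eq_vsub_rev]
  rw [dist_eq_norm_vsub V, dist_eq_norm_vsub V, hyr, hyc, ← real_inner_self_eq_norm_sq,
    ← real_inner_self_eq_norm_sq]
  simp only [inner_add_left, inner_add_right, inner_sub_left, inner_sub_right, hbd,
    real_inner_comm b, real_inner_comm d a]
  ring

theorem EuclideanGeometry.vsub_orthogonalProjection_eq_inner_smul {H : AffineSubspace ℝ E}
    [Nonempty H] [H.direction.HasOrthogonalProjection] {n : V} (hn : ‖n‖ = 1)
    (hHn : H.directionᗮ = ℝ ∙ n) {p : E} (hp : p ∈ H) (x : E) :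
    x -ᵥ (orthogonalProjection H x : E) = inner ℝ n (x -ᵥ p) • n := by
  obtain ⟨a, ha⟩ := Submodule.mem_span_singleton.1
    (hHn ▸ vsub_orthogonalProjection_mem_direction_orthogonal H x)
  have hπ : inner ℝ n ((orthogonalProjection H x : E) -ᵥ p) = 0 :=
    Submodule.inner_left_of_mem_orthogonal
      (AffineSubspace.vsub_mem_direction (orthogonalProjection_mem x) hp)
      (hHn ▸ Submodule.mem_span_singleton_self n)
  rw [← vsub_add_vsub_cancel x (orthogonalProjection H x : E) p, inner_add_right, hπ, ← ha,
    real_inner_smul_right, real_inner_self_eq_norm_sq, hn]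
  simp

variable [FiniteDimensional ℝ V]

theorem IsAffineHyperplane.exists_unit_normal {H : AffineSubspace ℝ E}
    (hH : IsAffineHyperplane (V := V) H) : ∃ n : V, ‖n‖ = 1 ∧ H.directionᗮ = ℝ ∙ n := by
  have hrank : Module.finrank ℝ H.directionᗮ = 1 := by
    have := H.direction.finrank_add_finrank_orthogonal
    have := hH.2
    omega
  obtain ⟨n₀, hn₀, hn₀ne⟩ := Submodule.exists_mem_ne_zero_of_ne_bot
    (Submodule.one_le_finrank_iff.1 hrank.ge)
  refine ⟨‖n₀‖⁻¹ • n₀, norm_smul_inv_norm hn₀ne, (Submodule.eq_of_le_of_finrank_eq ?_ ?_).symm⟩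
  · exact (Submodule.span_singleton_le_iff_mem _ _).2 (Submodule.smul_mem _ _ hn₀)
  · rw [hrank, finrank_span_singleton]
    exact smul_ne_zero (inv_ne_zero (norm_ne_zero_iff.2 hn₀ne)) hn₀ne

theorem IsAffineHyperplane.exists_reflection {H : AffineSubspace ℝ E}
    (hH : IsAffineHyperplane (V := V) H) :
    ∃ (r : E ≃ᵃ[ℝ] E) (f : E →ᵃ[ℝ] ℝ), IsReflectionAcross H r ∧ (∀ x, f x = 0 ↔ x ∈ H) ∧
      ∀ y c, dist y (r c) ^ 2 = dist y c ^ 2 + 4 * f c * f y := by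
  obtain ⟨p, hp⟩ := hH.1
  have : Nonempty H := ⟨⟨p, hp⟩⟩
  obtain ⟨n, hn, hHn⟩ := hH.exists_unit_normal
  let f : E →ᵃ[ℝ] ℝ :=
    (innerSL ℝ n).toLinearMap.toAffineMap.comp (AffineEquiv.vaddConst ℝ p).symm.toAffineMap
  have hf : ∀ x, x -ᵥ (orthogonalProjection H x : E) = f x • n :=
    vsub_orthogonalProjection_eq_inner_smul hn hHn hp
  have hfH : ∀ x, f x = 0 ↔ x ∈ H := fun x => by
    rw [← orthogonalProjection_eq_self_iff, eq_comm (a := (orthogonalProjection H x : E)),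
      ← vsub_eq_zero_iff_eq (p₁ := x), hf, smul_eq_zero,
      or_iff_left (norm_ne_zero_iff.1 (hn.symm ▸ one_ne_zero))]
  refine ⟨(reflection H).toAffineEquiv, f, ⟨(reflection H).isometry, fun x hx => ?_, ?_⟩, hfH,
    fun y c => ?_⟩
  · exact reflection_eq_self_iff x |>.2 hx
  · intro h
    have hfx : f (n +ᵥ p) = 1 := by simp [f, hn]
    have hx : n +ᵥ p ∈ H := (reflection_eq_self_iff _).1 congr($h (n +ᵥ p))
    exact one_ne_zero (hfx ▸ (hfH _).2 hx)
  · simp only [AffineIsometryEquiv.coe_toAffineEquiv]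
    rw [dist_reflection_sq, hf, hf, real_inner_smul_left, real_inner_smul_right,
      real_inner_self_eq_norm_sq, hn]
    ring

end Reflection

theorem IsPreconnected.mul_nonneg_of_mem_closure {X : Type*} [TopologicalSpace X] {f : X → ℝ}
    (hf : Continuous f) {s : Set X} (hs : IsPreconnected s) (hs0 : ∀ z ∈ s, f z ≠ 0)
    {y₀ y : X} (hy₀ : y₀ ∈ s) (hy : y ∈ closure s) : 0 ≤ f y₀ * f y := by
  have hpos : ∀ z ∈ s, 0 < f y₀ * f z := by
    intro z hz
    by_contra! h
    have h0 : (0 : ℝ) ∈ uIcc (f y₀) (f z) := by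
      rw [mem_uIcc]
      rcases (hs0 y₀ hy₀).lt_or_gt with h₀ | h₀
      · exact .inl ⟨h₀.le, by nlinarith [hs0 z hz]⟩
      · exact .inr ⟨by nlinarith [hs0 z hz], h₀.le⟩
    obtain ⟨w, hw, hw0⟩ := (isPreconnected_iff_ordConnected.1 (hs.image f hf.continuousOn))
      |>.uIcc_subset (mem_image_of_mem f hy₀) (mem_image_of_mem f hz) h0
    exact hs0 w hw hw0
  exact closure_minimal (fun z hz => (hpos z hz).le)
    (isClosed_le continuous_const (continuous_const.mul hf)) hy

theorem AffineMap.lineMap_ne_zero_of_mul_nonneg {a b t : ℝ} (ha : a ≠ 0) (hab : 0 ≤ a * b)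
    (ht : t ∈ Ico (0 : ℝ) 1) : lineMap a b t ≠ 0 := by
  rw [lineMap_apply_ring']
  intro h
  have hsum : (1 - t) * a ^ 2 + t * (a * b) = 0 := by linear_combination a * h
  have hpos : 0 < (1 - t) * a ^ 2 := mul_pos (by linarith [ht.2]) (by positivity)
  linarith [mul_nonneg ht.1 hab]

theorem AffineSubspace.exists_le_of_subset_iUnion {k W P : Type*} [Field k] [Infinite k]
    [AddCommGroup W] [Module k W] [AddTorsor W P] {ι : Type*} [Finite ι]
    {M : AffineSubspace k P} {N : ι → AffineSubspace k P} {p : P} (hpM : p ∈ M)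
    (hpN : ∀ i, p ∈ N i) (hM : (M : Set P) ⊆ ⋃ i, (N i : Set P)) : ∃ i, M ≤ N i := by
  by_contra! h
  have hne : ∀ i, (N i).direction.comap M.direction.subtype ≠ ⊤ := by
    intro i htop
    refine h i fun x hx => ?_
    have hv : x -ᵥ p ∈ (N i).direction := by
      simpa using (Submodule.eq_top_iff'.1 htop) ⟨x -ᵥ p, AffineSubspace.vsub_mem_direction hx hpM⟩
    simpa using AffineSubspace.vadd_mem_of_mem_direction hv (hpN i)
  obtain ⟨⟨v, hvM⟩, hv⟩ := Submodule.exists_forall_notMem_of_forall_ne_top _ hne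
  obtain ⟨i, hi⟩ := mem_iUnion.1 (hM (AffineSubspace.vadd_mem_of_mem_direction hvM hpM))
  exact hv i (by simpa using AffineSubspace.vsub_mem_direction hi (hpN i))

theorem AffineSubspace.exists_eq_affineSpan_inter_of_eventually {W P : Type*}
    [NormedAddCommGroup W] [NormedSpace ℝ W] [MetricSpace P] [NormedAddTorsor W P]
    {ι : Type*} [Finite ι] {M : AffineSubspace ℝ P} {S : ι → Set P} {p : P} (hpM : p ∈ M)
    (hpS : ∀ i, p ∈ S i) (hS : ∀ᶠ x in 𝓝 p, ∃ i, x ∈ S i) :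
    ∃ i, M = affineSpan ℝ ((M : Set P) ∩ S i) := by
  have hpN : ∀ i, p ∈ affineSpan ℝ ((M : Set P) ∩ S i) :=
    fun i => subset_affineSpan ℝ _ ⟨hpM, hpS i⟩
  have hcover : (M : Set P) ⊆ ⋃ i, (affineSpan ℝ ((M : Set P) ∩ S i) : Set P) := by
    intro x hx
    have hlim : Tendsto (AffineMap.lineMap p x) (𝓝[≠] (0 : ℝ)) (𝓝 p) := by
      simpa using (AffineMap.lineMap_continuous (p := p) (q := x)).continuousAt.tendsto.mono_left
        (nhdsWithin_le_nhds (a := (0 : ℝ)) (s := {0}ᶜ))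
    obtain ⟨t, ⟨i, hi⟩, ht⟩ := (hlim.eventually hS |>.and self_mem_nhdsWithin).exists
    have hy : AffineMap.lineMap p x t ∈ affineSpan ℝ ((M : Set P) ∩ S i) :=
      subset_affineSpan ℝ _ ⟨AffineMap.lineMap_mem t hpM hx, hi⟩
    refine mem_iUnion.2 ⟨i, ?_⟩
    have := AffineMap.lineMap_mem t⁻¹ (hpN i) hy
    rwa [AffineMap.lineMap_lineMap_right, inv_mul_cancel₀ ht, AffineMap.lineMap_apply_one] at this
  obtain ⟨i, hi⟩ := exists_le_of_subset_iUnion hpM hpN hcover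
  exact ⟨i, le_antisymm hi (affineSpan_le.2 inter_subset_left)⟩

theorem AffineSubspace.map_mul_toAffineMap {k W P : Type*} [Ring k] [AddCommGroup W] [Module k W]
    [AddTorsor W P] (M : AffineSubspace k P) (a b : P ≃ᵃ[k] P) :
    M.map (a * b).toAffineMap = (M.map b.toAffineMap).map a.toAffineMap := by
  rw [AffineSubspace.map_map]
  rfl

section Chamber

variable {V : Type*} [NormedAddCommGroup V] [InnerProductSpace ℝ V]
variable {E : Type*} [MetricSpace E] [NormedAddTorsor V E] {𝓗 : Set (AffineSubspace ℝ E)}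

def arrangementComplement (𝓗 : Set (AffineSubspace ℝ E)) : Set E :=
  (⋃ H ∈ 𝓗, (H : Set E))ᶜ

theorem mem_arrangementComplement {x : E} :
    x ∈ arrangementComplement 𝓗 ↔ ∀ H ∈ 𝓗, x ∉ H := by
  simp [arrangementComplement]

def closedChamber (𝓗 : Set (AffineSubspace ℝ E)) (c : E) : Set E :=
  closure (connectedComponentIn (arrangementComplement 𝓗) c)

theorem LiesOver.map {M : AffineSubspace ℝ E} {A : Set E} (h : LiesOver M A) (e : E ≃ᵃ[ℝ] E) :
    LiesOver (M.map e.toAffineMap) (e '' A) := by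
  unfold LiesOver at *
  conv_lhs => rw [h]
  rw [AffineSubspace.map_span, AffineSubspace.coe_map, AffineEquiv.coe_coe,
    image_inter e.injective]

theorem isometry_of_mem_reflGroup {w : E ≃ᵃ[ℝ] E} (hw : w ∈ reflGroup 𝓗) : Isometry w := by
  induction hw using Subgroup.closure_induction with
  | mem r hr => obtain ⟨_, _, hr⟩ := hr; exact hr.1
  | one => exact isometry_id
  | mul x y _ _ hx hy => exact hx.comp hy
  | inv x _ hx => exact (IsometryEquiv.mk x.toEquiv hx).symm.isometry

theorem Admissible.image_arrangementComplement (hadm : Admissible 𝓗) {w : E ≃ᵃ[ℝ] E}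
    (hw : w ∈ reflGroup 𝓗) : w '' arrangementComplement 𝓗 = arrangementComplement 𝓗 := by
  have hmaps : ∀ g ∈ reflGroup 𝓗, MapsTo g (arrangementComplement 𝓗) (arrangementComplement 𝓗) := by
    intro g hg x hx
    simp only [mem_arrangementComplement] at hx ⊢
    intro H hH hgx
    exact hx _ (hadm.1 g⁻¹ (inv_mem hg) H hH) ⟨g x, hgx, by simp [AffineEquiv.inv_def]⟩
  refine (hmaps w hw).image_subset.antisymm fun x hx => ⟨w⁻¹ x, hmaps _ (inv_mem hw) hx, ?_⟩
  simp [AffineEquiv.inv_def]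

theorem Admissible.image_closedChamber (hadm : Admissible 𝓗) {w : E ≃ᵃ[ℝ] E}
    (hw : w ∈ reflGroup 𝓗) {x : E} (hx : x ∈ arrangementComplement 𝓗) :
    w '' closedChamber 𝓗 x = closedChamber 𝓗 (w x) := by
  let h := (IsometryEquiv.mk w.toEquiv (isometry_of_mem_reflGroup hw)).toHomeomorph
  have : ⇑h = ⇑w := rfl
  rw [closedChamber, closedChamber, ← this, h.image_closure, h.image_connectedComponentIn hx, this,
    hadm.image_arrangementComplement hw]

variable [FiniteDimensional ℝ V]

theorem Admissible.finite_setOf_dist_le (hadm : Admissible 𝓗) (c z : E) (R : ℝ) :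
    {g | g ∈ reflGroup 𝓗 ∧ dist z (g c) ≤ R}.Finite := by
  have hK : IsCompact (Metric.closedBall z R) := by
    let e : V ≃ᵢ E := IsometryEquiv.vaddConst z
    simpa [e.image_closedBall] using (isCompact_closedBall (e.symm z) R).image e.continuous
  refine (hadm.2 {c} _ isCompact_singleton hK).subset ?_
  rintro g ⟨hg, hgz⟩
  exact ⟨hg, g c, mem_image_of_mem g rfl, by rwa [Metric.mem_closedBall, dist_comm]⟩

theorem Admissible.exists_forall_dist_le_s15 (hadm : Admissible 𝓗) (c z : E)
    {S : Set (E ≃ᵃ[ℝ] E)} (hS : S ⊆ reflGroup 𝓗) (hne : S.Nonempty) :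
    ∃ g ∈ S, ∀ g' ∈ S, dist z (g c) ≤ dist z (g' c) := by
  obtain ⟨g₁, hg₁⟩ := hne
  have hT : {g | g ∈ S ∧ dist z (g c) ≤ dist z (g₁ c)}.Finite :=
    (hadm.finite_setOf_dist_le c z _).subset fun g hg => ⟨hS hg.1, hg.2⟩
  obtain ⟨g, hg, hmin⟩ := Set.exists_min_image _ (fun g => dist z (g c)) hT ⟨g₁, hg₁, le_rfl⟩
  refine ⟨g, hg.1, fun g' hg' => ?_⟩
  by_cases hg'T : dist z (g' c) ≤ dist z (g₁ c)
  · exact hmin g' ⟨hg', hg'T⟩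
  · exact hg.2.trans (le_of_not_ge hg'T)

theorem mem_closedChamber_of_forall_dist_le
    (h𝓗 : ∀ H ∈ 𝓗, IsAffineHyperplane (V := V) H) {c y : E}
    (hc : c ∈ arrangementComplement 𝓗) (hy : ∀ g ∈ reflGroup 𝓗, dist y c ≤ dist y (g c)) :
    y ∈ closedChamber 𝓗 c := by
  have hseg : MapsTo (AffineMap.lineMap c y) (Ico (0 : ℝ) 1) (arrangementComplement 𝓗) := by
    intro t ht
    rw [mem_arrangementComplement]
    intro H hH hmem
    obtain ⟨r, f, hr, hfH, hdist⟩ := (h𝓗 H hH).exists_reflection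
    have hfc : f c ≠ 0 := fun h => mem_arrangementComplement.1 hc H hH ((hfH c).1 h)
    have hside : 0 ≤ f c * f y := by
      have hle := hy r (Subgroup.subset_closure ⟨H, hH, hr⟩)
      nlinarith [hdist y c, dist_nonneg (x := y) (y := c)]
    refine AffineMap.lineMap_ne_zero_of_mul_nonneg hfc hside ht ?_
    rw [← f.apply_lineMap]
    exact (hfH _).2 hmem
  have hsub := (isPreconnected_Ico.image _ AffineMap.lineMap_continuous.continuousOn)
    |>.subset_connectedComponentIn ⟨0, ⟨le_rfl, zero_lt_one⟩, AffineMap.lineMap_apply_zero _ _⟩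
      hseg.image_subset
  refine closure_mono hsub (image_closure_subset_closure_image AffineMap.lineMap_continuous ?_)
  exact ⟨1, by simp [closure_Ico zero_ne_one], AffineMap.lineMap_apply_one _ _⟩

theorem mem_image_closedChamber_of_forall_dist_le (h𝓗 : ∀ H ∈ 𝓗, IsAffineHyperplane (V := V) H)
    {c z : E} (hc : c ∈ arrangementComplement 𝓗) {g : E ≃ᵃ[ℝ] E} (hg : g ∈ reflGroup 𝓗)
    (hmin : ∀ g' ∈ reflGroup 𝓗, dist z (g c) ≤ dist z (g' c)) :
    z ∈ g '' closedChamber 𝓗 c := by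
  have hdist : ∀ x, dist (g.symm z) x = dist z (g x) := fun x => by
    rw [← (isometry_of_mem_reflGroup hg).dist_eq, g.apply_symm_apply]
  refine ⟨g.symm z, mem_closedChamber_of_forall_dist_le h𝓗 hc fun g' hg' => ?_,
    g.apply_symm_apply z⟩
  rw [hdist, hdist]
  exact hmin (g * g') (mul_mem hg hg')

theorem exists_mem_reflGroup_fix_dist_lt (h𝓗 : ∀ H ∈ 𝓗, IsAffineHyperplane (V := V) H)
    (hadm : Admissible 𝓗) {c l : E} (hc : c ∈ arrangementComplement 𝓗)
    (hlA : l ∈ closedChamber 𝓗 c)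
    {g : E ≃ᵃ[ℝ] E} (hg : g ∈ reflGroup 𝓗)
    (hlg : l ∈ g '' closedChamber 𝓗 c)
    {H : AffineSubspace ℝ E} (hH : H ∈ 𝓗) {t : ℝ} (ht : t ∈ Icc (0 : ℝ) 1)
    (hmem : AffineMap.lineMap c (g c) t ∈ H) :
    ∃ r ∈ reflGroup 𝓗, r l = l ∧ dist c (r (g c)) < dist c (g c) := by
  obtain ⟨r, f, hr, hfH, hdist⟩ := (h𝓗 H hH).exists_reflection
  have hf0 : ∀ x ∈ arrangementComplement 𝓗, f x ≠ 0 := fun x hx h =>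
    mem_arrangementComplement.1 hx H hH ((hfH x).1 h)
  have hgc : g c ∈ arrangementComplement 𝓗 := by
    rw [← hadm.image_arrangementComplement hg]
    exact mem_image_of_mem g hc
  have hopp : f c * f (g c) < 0 := by
    by_contra! hside
    have ht1 : t ≠ 1 := by
      rintro rfl
      exact hf0 _ hgc ((hfH _).2 (by simpa using hmem))
    refine AffineMap.lineMap_ne_zero_of_mul_nonneg (hf0 c hc) hside ⟨ht.1, ht.2.lt_of_ne ht1⟩ ?_
    rw [← f.apply_lineMap]
    exact (hfH _).2 hmem
  have hsign : ∀ x ∈ arrangementComplement 𝓗,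
      l ∈ closedChamber 𝓗 x → 0 ≤ f x * f l :=
    fun x hx hl => isPreconnected_connectedComponentIn.mul_nonneg_of_mem_closure
      f.continuous_of_finiteDimensional (fun z hz => hf0 z (connectedComponentIn_subset _ _ hz))
      (mem_connectedComponentIn hx) hl
  have h₁ := hsign c hc hlA
  have h₂ := hsign (g c) hgc (hadm.image_closedChamber hg hc ▸ hlg)
  have hl : f l = 0 := by
    have : (f c * f (g c)) * f l ^ 2 = (f c * f l) * (f (g c) * f l) := by ring
    exact pow_eq_zero_iff two_ne_zero |>.1 (by nlinarith [mul_nonneg h₁ h₂, sq_nonneg (f l)])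
  refine ⟨r, Subgroup.subset_closure ⟨H, hH, hr⟩, hr.2.1 l ((hfH l).1 hl), ?_⟩
  have := hdist c (g c)
  exact lt_of_pow_lt_pow_left₀ 2 dist_nonneg (by nlinarith)

theorem exists_fix_image_closedChamber_eq (h𝓗 : ∀ H ∈ 𝓗, IsAffineHyperplane (V := V) H)
    (hadm : Admissible 𝓗) {c l : E} (hc : c ∈ arrangementComplement 𝓗)
    (hlA : l ∈ closedChamber 𝓗 c)
    {u : E ≃ᵃ[ℝ] E} (hu : u ∈ reflGroup 𝓗)
    (hlu : l ∈ u '' closedChamber 𝓗 c) :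
    ∃ σ ∈ reflGroup 𝓗, σ l = l ∧
      σ '' closedChamber 𝓗 c =
        u '' closedChamber 𝓗 c := by
  -- `S` is the coset `W_𝓗^l u`.
  obtain ⟨g, ⟨hg, hgl⟩, hmin⟩ := hadm.exists_forall_dist_le_s15 c c
    (S := {g | g ∈ reflGroup 𝓗 ∧ g.symm l = u.symm l}) (fun g hg => hg.1) ⟨u, hu, rfl⟩
  have hlg : l ∈ g '' closedChamber 𝓗 c := by
    obtain ⟨a, ha, rfl⟩ := hlu
    rw [u.symm_apply_apply] at hgl
    exact ⟨a, ha, (congrArg g hgl).symm.trans (g.apply_symm_apply _)⟩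
  have hseg : MapsTo (AffineMap.lineMap c (g c)) (Icc (0 : ℝ) 1) (arrangementComplement 𝓗) := by
    intro t ht
    rw [mem_arrangementComplement]
    intro H hH hmem
    obtain ⟨r, hr, hrl, hlt⟩ :=
      exists_mem_reflGroup_fix_dist_lt h𝓗 hadm hc hlA hg hlg hH ht hmem
    refine (hmin (r * g) ⟨mul_mem hr hg, ?_⟩).not_gt hlt
    rw [← hgl, ← AffineEquiv.inv_def, mul_inv_rev, AffineEquiv.coe_mul, Function.comp_apply,
      AffineEquiv.inv_def, AffineEquiv.inv_def, r.symm_apply_eq.2 hrl.symm]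
  have hgc : g c ∈ connectedComponentIn (arrangementComplement 𝓗) c :=
    (isPreconnected_Icc.image _ AffineMap.lineMap_continuous.continuousOn
      |>.subset_connectedComponentIn ⟨0, ⟨le_rfl, zero_le_one⟩, AffineMap.lineMap_apply_zero _ _⟩
        hseg.image_subset) ⟨1, ⟨zero_le_one, le_rfl⟩, AffineMap.lineMap_apply_one _ _⟩
  have hgA : g '' closedChamber 𝓗 c = closedChamber 𝓗 c := by
    rw [hadm.image_closedChamber hg hc, closedChamber, closedChamber, ← connectedComponentIn_eq hgc]
  refine ⟨u * g⁻¹, mul_mem hu (inv_mem hg), ?_, ?_⟩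
  · change u (g.symm l) = l
    rw [hgl, u.apply_symm_apply]
  · rw [AffineEquiv.coe_mul, image_comp, AffineEquiv.inv_def]
    conv_lhs => rw [← hgA]
    rw [AffineEquiv.image_symm, preimage_image_eq _ g.injective]

theorem Admissible.eventually_dist_lt (hadm : Admissible 𝓗) (c l : E) {v : E ≃ᵃ[ℝ] E}
    (hvmin : ∀ g ∈ reflGroup 𝓗, dist l (v c) ≤ dist l (g c)) :
    ∀ᶠ x in 𝓝 l, ∀ g ∈ reflGroup 𝓗, dist l (g c) ≠ dist l (v c) → dist x (v c) < dist x (g c) := by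
  set m := dist l (v c)
  have hnear : ∀ᶠ x in 𝓝 l, ∀ g ∈ {g | g ∈ reflGroup 𝓗 ∧ dist l (g c) ≤ m + 1},
      dist l (g c) ≠ m → dist x (v c) < dist x (g c) := by
    refine (eventually_all_finite (hadm.finite_setOf_dist_le c l (m + 1))).2 fun g hg => ?_
    by_cases hgm : dist l (g c) = m
    · exact .of_forall fun _ hne => absurd hgm hne
    · refine ((continuous_id.dist continuous_const).continuousAt.eventually_lt
        (continuous_id.dist continuous_const).continuousAt
        ((hvmin g hg.1).lt_of_ne (Ne.symm hgm))).mono fun _ h _ => h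
  filter_upwards [hnear, Metric.ball_mem_nhds l one_half_pos] with x hx hxl g hg hgm
  by_cases hgB : dist l (g c) ≤ m + 1
  · exact hx g ⟨hg, hgB⟩ hgm
  · rw [Metric.mem_ball] at hxl
    linarith [dist_triangle x l (v c), dist_triangle l x (g c), dist_comm x l]

theorem eventually_exists_mem_image_closedChamber (h𝓗 : ∀ H ∈ 𝓗, IsAffineHyperplane (V := V) H)
    (hadm : Admissible 𝓗) {c : E} (hc : c ∈ arrangementComplement 𝓗) (l : E) :
    ∃ J : Set (E ≃ᵃ[ℝ] E), J.Finite ∧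
      (∀ u ∈ J, u ∈ reflGroup 𝓗 ∧
        l ∈ u '' closedChamber 𝓗 c) ∧
      ∀ᶠ x in 𝓝 l, ∃ u ∈ J, x ∈ u '' closedChamber 𝓗 c := by
  obtain ⟨v, hv, hvmin⟩ := hadm.exists_forall_dist_le_s15 c l subset_rfl ⟨1, one_mem _⟩
  refine ⟨{g | g ∈ reflGroup 𝓗 ∧ dist l (g c) = dist l (v c)},
    (hadm.finite_setOf_dist_le c l _).subset fun g hg => ⟨hg.1, hg.2.le⟩,
    fun u hu => ⟨hu.1, mem_image_closedChamber_of_forall_dist_le h𝓗 hc hu.1 (hu.2 ▸ hvmin)⟩, ?_⟩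
  filter_upwards [hadm.eventually_dist_lt c l hvmin] with x hx
  obtain ⟨u, hu, humin⟩ := hadm.exists_forall_dist_le_s15 c x subset_rfl ⟨1, one_mem _⟩
  refine ⟨u, ⟨hu, ?_⟩, mem_image_closedChamber_of_forall_dist_le h𝓗 hc hu humin⟩
  by_contra hne
  exact (humin v hv).not_gt (hx u hu hne)

theorem exists_fix_liesOver_map_inv (h𝓗 : ∀ H ∈ 𝓗, IsAffineHyperplane (V := V) H)
    (hadm : Admissible 𝓗) {c l : E} (hc : c ∈ arrangementComplement 𝓗)
    (hlA : l ∈ closedChamber 𝓗 c)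
    {M : AffineSubspace ℝ E} (hlM : l ∈ M) :
    ∃ σ ∈ reflGroup 𝓗, σ l = l ∧
      LiesOver (M.map σ⁻¹.toAffineMap) (closedChamber 𝓗 c) := by
  obtain ⟨J, hJ, hJl, hJnhds⟩ := eventually_exists_mem_image_closedChamber h𝓗 hadm hc l
  have := hJ.to_subtype
  obtain ⟨⟨u, hu⟩, hMu⟩ := AffineSubspace.exists_eq_affineSpan_inter_of_eventually
    (S := fun u : J => (u : E ≃ᵃ[ℝ] E) '' closedChamber 𝓗 c) hlM (fun u => (hJl u u.2).2)
    (by simpa using hJnhds)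
  obtain ⟨σ, hσ, hσl, hσA⟩ :=
    exists_fix_image_closedChamber_eq h𝓗 hadm hc hlA (hJl u hu).1 (hJl u hu).2
  refine ⟨σ, hσ, hσl, ?_⟩
  have hover : LiesOver M (σ '' closedChamber 𝓗 c) := by rw [hσA]; exact hMu
  have := hover.map σ⁻¹
  rwa [← image_comp, ← AffineEquiv.coe_mul, inv_mul_cancel, AffineEquiv.coe_one, image_id] at this

end Chamber

theorem translates_through_point_description_general
    {V : Type*} [NormedAddCommGroup V] [InnerProductSpace ℝ V] [FiniteDimensional ℝ V]
    {E : Type*} [MetricSpace E] [NormedAddTorsor V E]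
    (𝓗 : Set (AffineSubspace ℝ E)) (h𝓗 : ∀ H ∈ 𝓗, IsAffineHyperplane (V := V) H)
    (hadm : Admissible 𝓗)
    (C : Set E) (hC : IsChamber 𝓗 C) (A : Set E) (hA : A = closure C)
    (K : Subgroup (E ≃ᵃ[ℝ] E))
    (L : AffineSubspace ℝ E)
    (l : E) (hlA : l ∈ A) :
    {M : AffineSubspace ℝ E | ∃ w ∈ reflGroup 𝓗 ⊔ K, M = L.map w.toAffineMap ∧ l ∈ M} =
      {M : AffineSubspace ℝ E | ∃ σ ∈ reflGroup 𝓗, σ l = l ∧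
        ∃ M' : AffineSubspace ℝ E, (∃ w ∈ reflGroup 𝓗 ⊔ K, M' = L.map w.toAffineMap) ∧
          LiesOver M' A ∧ l ∈ M' ∧ M = M'.map σ.toAffineMap} := by
  obtain ⟨c, hc, rfl⟩ := hC
  subst hA
  have hW : reflGroup 𝓗 ≤ reflGroup 𝓗 ⊔ K := le_sup_left
  ext M
  constructor
  · rintro ⟨w, hw, rfl, hlM⟩
    obtain ⟨σ, hσ, hσl, hover⟩ := exists_fix_liesOver_map_inv h𝓗 hadm hc hlA hlM
    refine ⟨σ, hσ, hσl, _,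
      ⟨σ⁻¹ * w, mul_mem (inv_mem (hW hσ)) hw, (L.map_mul_toAffineMap _ _).symm⟩, hover, ⟨l, hlM, σ.symm_apply_eq.2 hσl.symm⟩, ?_⟩
    rw [← AffineSubspace.map_mul_toAffineMap, mul_inv_cancel]
    exact (AffineSubspace.map_id _).symm
  · rintro ⟨σ, hσ, hσl, _, ⟨w, hw, rfl⟩, -, hlM', rfl⟩
    exact ⟨σ * w, mul_mem (hW hσ) hw, (L.map_mul_toAffineMap _ _).symm,
      AffineSubspace.mem_map.2 ⟨l, hlM', hσl⟩⟩

/-- Let `𝓗` be an admissible affine hyperplane arrangement in `E`, let `K`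
be a subgroup of the isometry group of `E` stabilizing `⋀` and preserving `𝓗`, set
`W_{𝓗,K} = K ⋉ W_𝓗`, let `L` be a flat lying over `⋀`, and let `l ∈ L ∩ ⋀`.  Then
`{w·L : w ∈ W_{𝓗,K}, l ∈ w·L}` equals
`{σ·M : σ ∈ W_𝓗^l, M = w·L for some w ∈ W_{𝓗,K} such that M lies over ⋀ and l ∈ M}`,
where `W_𝓗^l` is the stabilizer of `l` in `W_𝓗`. -/
theorem translates_through_point_description
    {V : Type*} [NormedAddCommGroup V] [InnerProductSpace ℝ V] [FiniteDimensional ℝ V]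
    {E : Type*} [MetricSpace E] [NormedAddTorsor V E]
    (𝓗 : Set (AffineSubspace ℝ E)) (h𝓗 : ∀ H ∈ 𝓗, IsAffineHyperplane (V := V) H)
    (hadm : Admissible 𝓗)
    (C : Set E) (hC : IsChamber 𝓗 C) (A : Set E) (hA : A = closure C)
    (K : Subgroup (E ≃ᵃ[ℝ] E))
    (hKiso : ∀ k ∈ K, Isometry k)
    (hKA : ∀ k ∈ K, ⇑k '' A = A)
    (hK𝓗 : ∀ k ∈ K, ∀ H ∈ 𝓗, H.map k.toAffineMap ∈ 𝓗)
    (L : AffineSubspace ℝ E) (hL : IsFlat 𝓗 L) (hLover : LiesOver L A)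
    (l : E) (hlL : l ∈ L) (hlA : l ∈ A) :
    {M : AffineSubspace ℝ E | ∃ w ∈ reflGroup 𝓗 ⊔ K, M = L.map w.toAffineMap ∧ l ∈ M} =
      {M : AffineSubspace ℝ E | ∃ σ ∈ reflGroup 𝓗, σ l = l ∧
        ∃ M' : AffineSubspace ℝ E, (∃ w ∈ reflGroup 𝓗 ⊔ K, M' = L.map w.toAffineMap) ∧
          LiesOver M' A ∧ l ∈ M' ∧ M = M'.map σ.toAffineMap} :=
  translates_through_point_description_general 𝓗 h𝓗 hadm C hC A hA K L l hlA
end
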